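/- arXiv:2010.12856 — 9 statements merged into one kernel-verified Lean document; each statement's English description precedes it below -/
import Mathlib

section
/- For real numbers h > 0 with h ≠ 1 and p ∈ ℝ, the generalized Kantorovich constant satisfies K(h,p) = K(h⁻¹,p), where K(h,p) = ((h^p - h)/((p-1)(h-1))) * (((p-1)/p) * (h^p - 1)/(h^p - h))^p. -/
open scoped ComplexOrder Kronecker

/-- Matrix power via the continuous functional calculus. -/
noncomputable def mpow {n : Type*} [Fintype n] [DecidableEq n]
    (A : Matrix n n ℂ) (p : ℝ) : Matrix n n ℂ :=
  cfc (fun x : ℝ => x ^ p) A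

/-- The Loewner order on matrices. -/
def LoewnerLE {n : Type*} [Fintype n] (A B : Matrix n n ℂ) : Prop :=
  (B - A).PosSemidef

/-- The matrix geometric mean `A # B = A^{1/2}(A^{-1/2} B A^{-1/2})^{1/2} A^{1/2}`. -/
noncomputable def geo {n : Type*} [Fintype n] [DecidableEq n]
    (A B : Matrix n n ℂ) : Matrix n n ℂ :=
  mpow A (1/2) * mpow (mpow A (-(1/2)) * B * mpow A (-(1/2))) (1/2) * mpow A (1/2)

/-- The generalized Kantorovich constant. -/
noncomputable def Kconst (h p : ℝ) : ℝ :=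
  ((h ^ p - h) / ((p - 1) * (h - 1))) *
    (((p - 1) / p) * ((h ^ p - 1) / (h ^ p - h))) ^ p

/-- The Specht ratio. -/
noncomputable def Specht (h : ℝ) : ℝ :=
  if h = 1 then 1 else (h - 1) * h ^ (1 / (h - 1)) / (Real.exp 1 * Real.log h)


private lemma mul_rpow_posleft (a b p : ℝ) (ha : 0 < a) :
    (a * b) ^ p = a ^ p * b ^ p := by
  rcases lt_trichotomy b 0 with hb | hb | hb
  · rw [Real.rpow_def_of_neg hb, Real.rpow_def_of_neg (mul_neg_of_pos_of_neg ha hb),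
      Real.log_mul ha.ne' hb.ne, Real.rpow_def_of_pos ha]
    rw [add_mul, Real.exp_add]
    ring
  · subst hb
    rw [mul_zero]
    rcases eq_or_ne p 0 with rfl | hp
    · simp
    · simp [Real.zero_rpow hp]
  · rw [Real.mul_rpow ha.le hb.le]

theorem kantorovich_symm_inv (h p : ℝ) (hh : 0 < h) (hh1 : h ≠ 1)
    (hp0 : p ≠ 0) (hp1 : p ≠ 1) :
    Kconst h p = Kconst h⁻¹ p := by
  have hne : h ^ p ≠ h := by
    intro hEq
    have : Real.log (h ^ p) = Real.log h := by rw [hEq]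
    rw [Real.log_rpow hh] at this
    have hlog : Real.log h ≠ 0 := Real.log_ne_zero_of_pos_of_ne_one hh hh1
    have : p = 1 := mul_right_cancel₀ hlog (this.trans (one_mul _).symm)
    exact hp1 this
  have ht : (0:ℝ) < h ^ p := Real.rpow_pos_of_pos hh p
  have hinv : h⁻¹ ^ p = (h ^ p)⁻¹ := Real.inv_rpow hh.le p
  have hh0 : h ≠ 0 := hh.ne'
  have hm1 : h - 1 ≠ 0 := sub_ne_zero.mpr hh1
  have htm : h ^ p - h ≠ 0 := sub_ne_zero.mpr hne
  have hpm1 : p - 1 ≠ 0 := sub_ne_zero.mpr hp1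
  have ht0 : h ^ p ≠ 0 := (Real.rpow_pos_of_pos hh p).ne'
  have h1m : 1 - h ≠ 0 := sub_ne_zero.mpr (Ne.symm hh1)
  have hmt : h - h ^ p ≠ 0 := sub_ne_zero.mpr (Ne.symm hne)
  set t := h ^ p with hT
  have e1 : (h⁻¹ ^ p - h⁻¹) / ((p - 1) * (h⁻¹ - 1))
      = (t - h) / ((p - 1) * (h - 1)) / t := by
    rw [hinv]
    field_simp
    ring
  have e2 : ((p - 1) / p) * ((h⁻¹ ^ p - 1) / (h⁻¹ ^ p - h⁻¹))
      = h * (((p - 1) / p) * ((t - 1) / (t - h))) := by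
    rw [hinv]
    field_simp
    ring
  unfold Kconst
  rw [show (h:ℝ)^p = t from hT.symm, e1, e2, mul_rpow_posleft h _ p hh, show (h:ℝ)^p = t from hT.symm]
  field_simp
end

section
/- For h > 0 with h ≠ 1 and real p (p ≠ 0, 1), the generalized Kantorovich constant satisfies the symmetry K(h,p) = K(h,1-p). -/
/-!
Write `K(h, p) = F(h, p) * B(h, p) ^ p` with `B(h, p) = ((p - 1) / p) * ((h ^ p - 1) / (h ^ p - h))`.
Since `h ^ (1 - p) = h / h ^ p`, the substitution `p ↦ 1 - p` turns `B` into `(h * B)⁻¹` and `F` into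
`F * h * B / h ^ p`. The base `B` is a ratio of two difference quotients of `x ↦ h ^ x`, both of the
sign of `log h`, hence positive; so `(h * B)⁻¹ ^ (1 - p) = h ^ p * B ^ p / (h * B)` and everything cancels.
-/

open scoped ComplexOrder Kronecker

theorem StrictMono.sub_mul_sub_pos {α : Type*} [Ring α] [LinearOrder α] [IsStrictOrderedRing α]
    {f : α → α} (hf : StrictMono f) {a b : α} (hab : a ≠ b) :
    0 < (f a - f b) * (a - b) := by
  rcases hab.lt_or_gt with hlt | hgt
  · exact mul_pos_of_neg_of_neg (sub_neg.2 (hf hlt)) (sub_neg.2 hlt)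
  · exact mul_pos (sub_pos.2 (hf hgt)) (sub_pos.2 hgt)

namespace Real

theorem rpow_sub_rpow_div_sub_mul_log_pos {h : ℝ} (hh : 0 < h) (hh1 : h ≠ 1) {a b : ℝ}
    (hab : a ≠ b) : 0 < (h ^ a - h ^ b) / (a - b) * log h := by
  have hlog : log h ≠ 0 := log_ne_zero_of_pos_of_ne_one hh hh1
  have key := exp_strictMono.sub_mul_sub_pos (a := log h * a) (b := log h * b)
    (by simpa [hlog] using hab)
  rw [← rpow_def_of_pos hh, ← rpow_def_of_pos hh, ← mul_sub] at key
  have hab' : a - b ≠ 0 := sub_ne_zero.2 hab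
  have hquot : (h ^ a - h ^ b) / (a - b) * log h
      = (h ^ a - h ^ b) * (log h * (a - b)) / (a - b) ^ 2 := by
    field_simp
  rw [hquot]
  exact div_pos key (sq_pos_of_ne_zero hab')

end Real

noncomputable def kantorovichBase (h p : ℝ) : ℝ :=
  ((p - 1) / p) * ((h ^ p - 1) / (h ^ p - h))

noncomputable def kantorovichFactor (h p : ℝ) : ℝ :=
  (h ^ p - h) / ((p - 1) * (h - 1))

theorem Kconst_eq_factor_mul_base_rpow (h p : ℝ) :
    Kconst h p = kantorovichFactor h p * kantorovichBase h p ^ p :=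
  rfl

theorem kantorovichBase_pos {h p : ℝ} (hh : 0 < h) (hh1 : h ≠ 1) (hp0 : p ≠ 0) (hp1 : p ≠ 1) :
    0 < kantorovichBase h p := by
  have h0 := Real.rpow_sub_rpow_div_sub_mul_log_pos hh hh1 hp0
  have h1 := Real.rpow_sub_rpow_div_sub_mul_log_pos hh hh1 hp1
  rw [Real.rpow_zero, sub_zero] at h0
  rw [Real.rpow_one] at h1
  have hlog : Real.log h ≠ 0 := Real.log_ne_zero_of_pos_of_ne_one hh hh1
  have hratio : kantorovichBase h p
      = (h ^ p - 1) / p * Real.log h / ((h ^ p - h) / (p - 1) * Real.log h) := by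
    rw [mul_div_mul_right _ _ hlog, div_div_div_eq, mul_comm, kantorovichBase, div_mul_div_comm]
  rw [hratio]
  exact div_pos h0 h1

theorem kantorovichBase_one_sub {h : ℝ} (hh : 0 < h) (p : ℝ) :
    kantorovichBase h (1 - p) = (h * kantorovichBase h p)⁻¹ := by
  have ht : h ^ p ≠ 0 := (Real.rpow_pos_of_pos hh p).ne'
  unfold kantorovichBase
  rw [Real.rpow_sub hh, Real.rpow_one]
  field_simp
  congr 1 <;> ring

theorem kantorovichFactor_one_sub {h p : ℝ} (hh : 0 < h) (hp1 : p ≠ 1) (hth : h ^ p ≠ h) :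
    kantorovichFactor h (1 - p) = kantorovichFactor h p * (h * kantorovichBase h p) / h ^ p := by
  have ht : h ^ p ≠ 0 := (Real.rpow_pos_of_pos hh p).ne'
  rw [kantorovichBase, kantorovichFactor, kantorovichFactor, Real.rpow_sub hh, Real.rpow_one]
  field_simp
  conv_rhs => rw [← neg_div_neg_eq]
  congr 1 <;> ring

theorem kantorovich_symm_one_sub (h p : ℝ) (hh : 0 < h) (hh1 : h ≠ 1)
    (hp0 : p ≠ 0) (hp1 : p ≠ 1) :
    Kconst h p = Kconst h (1 - p) := by
  have hB := kantorovichBase_pos hh hh1 hp0 hp1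
  have hhB : 0 < h * kantorovichBase h p := mul_pos hh hB
  have hth : h ^ p ≠ h := by
    simpa using (Real.rpow_right_inj hh hh1 (z := 1)).not.2 hp1
  have hpow : (h * kantorovichBase h p)⁻¹ ^ (1 - p)
      = h ^ p * kantorovichBase h p ^ p / (h * kantorovichBase h p) := by
    rw [Real.inv_rpow hhB.le, Real.rpow_sub hhB, Real.rpow_one, Real.mul_rpow hh.le hB.le, inv_div]
  rw [Kconst_eq_factor_mul_base_rpow, Kconst_eq_factor_mul_base_rpow, kantorovichBase_one_sub hh,
    kantorovichFactor_one_sub hh hp1 hth, hpow]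
  field_simp
end

section
/- For h > 0 with h ≠ 1 and nonzero reals p, r, the generalized Kantorovich constant satisfies K(h^r, p/r)^(1/p) = K(h^p, r/p)^(-1/r). -/
open scoped ComplexOrder Kronecker

lemma exp_sub_div_pos' {x y : ℝ} (hxy : x ≠ y) :
    0 < (Real.exp x - Real.exp y) / (x - y) := by
  rcases hxy.lt_or_gt with hlt | hlt
  · apply div_pos_of_neg_of_neg <;> simp [hlt, Real.exp_lt_exp.mpr hlt, sub_neg]
  · apply div_pos <;> simp [hlt, Real.exp_lt_exp.mpr hlt, sub_pos]

theorem kantorovich_power_identity (h p r : ℝ) (hh : 0 < h) (hh1 : h ≠ 1)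
    (hp0 : p ≠ 0) (hr0 : r ≠ 0) :
    Kconst (h ^ r) (p / r) ^ (1 / p) = Kconst (h ^ p) (r / p) ^ (-(1 / r)) := by
  by_cases hpr : p = r
  · subst hpr
    simp only [Kconst, div_self hp0, Real.rpow_one, sub_self, zero_div, zero_mul, mul_zero]
    rw [Real.zero_rpow (one_div_ne_zero hp0), Real.zero_rpow (by simp [hp0])]
  -- nondegenerate case
  set L := Real.log h with hLdef
  have hL : L ≠ 0 := Real.log_ne_zero_of_pos_of_ne_one hh hh1
  have hexp : ∀ s : ℝ, h ^ s = Real.exp (L * s) := fun s => Real.rpow_def_of_pos hh s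
  have hLp : L * p ≠ 0 := mul_ne_zero hL hp0
  have hLr : L * r ≠ 0 := mul_ne_zero hL hr0
  have hLpr : L * p ≠ L * r := fun hc => hpr (mul_left_cancel₀ hL hc)
  have hane1 : h ^ p - 1 ≠ 0 := by
    rw [hexp, sub_ne_zero]
    exact fun hc => hLp (by simpa using Real.exp_eq_exp.mp (hc.trans Real.exp_zero.symm))
  have hbne1 : h ^ r - 1 ≠ 0 := by
    rw [hexp, sub_ne_zero]
    exact fun hc => hLr (by simpa using Real.exp_eq_exp.mp (hc.trans Real.exp_zero.symm))
  have hab : h ^ p - h ^ r ≠ 0 := by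
    rw [hexp, hexp, sub_ne_zero]; exact fun hc => hLpr (Real.exp_eq_exp.mp hc)
  have hba : h ^ r - h ^ p ≠ 0 := fun hc => hab (by linarith [sub_eq_zero.mp hc])
  have hpr' : p - r ≠ 0 := sub_ne_zero.mpr hpr
  have hrp' : r - p ≠ 0 := sub_ne_zero.mpr (Ne.symm hpr)
  set W : ℝ := ((p - r) * (h ^ p - 1)) / (p * (h ^ p - h ^ r)) with hWdef
  set Z : ℝ := ((r - p) * (h ^ r - 1)) / (r * (h ^ r - h ^ p)) with hZdef
  have hWpos : 0 < W := by
    have h1 : 0 < (Real.exp (L * p) - Real.exp 0) / (L * p - 0) :=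
      exp_sub_div_pos' (by simpa using hLp)
    have h2 : 0 < (L * p - L * r) / (Real.exp (L * p) - Real.exp (L * r)) :=
      inv_pos.mp (by rw [inv_div]; exact exp_sub_div_pos' hLpr)
    have key : W = ((Real.exp (L * p) - Real.exp 0) / (L * p - 0)) *
        ((L * p - L * r) / (Real.exp (L * p) - Real.exp (L * r))) := by
      have e1 : Real.exp (L * p) - Real.exp (L * r) ≠ 0 := by
        rw [sub_ne_zero]; exact fun hc => hLpr (Real.exp_eq_exp.mp hc)
      rw [hWdef, hexp, hexp, Real.exp_zero]
      field_simp
      ring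
    rw [key]; exact mul_pos h1 h2
  have hZpos : 0 < Z := by
    have h1 : 0 < (Real.exp (L * r) - Real.exp 0) / (L * r - 0) :=
      exp_sub_div_pos' (by simpa using hLr)
    have h2 : 0 < (L * r - L * p) / (Real.exp (L * r) - Real.exp (L * p)) :=
      inv_pos.mp (by rw [inv_div]; exact exp_sub_div_pos' (Ne.symm hLpr))
    have key : Z = ((Real.exp (L * r) - Real.exp 0) / (L * r - 0)) *
        ((L * r - L * p) / (Real.exp (L * r) - Real.exp (L * p))) := by
      have e1 : Real.exp (L * r) - Real.exp (L * p) ≠ 0 := by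
        rw [sub_ne_zero]; exact fun hc => hLpr (Real.exp_eq_exp.mp hc).symm
      rw [hZdef, hexp, hexp, Real.exp_zero]
      field_simp
      ring
    rw [key]; exact mul_pos h1 h2
  -- (h^r)^(p/r) = h^p and (h^p)^(r/p) = h^r
  have hba' : (h ^ r) ^ (p / r) = h ^ p := by
    rw [← Real.rpow_mul hh.le]
    congr 1
    field_simp
  have hab' : (h ^ p) ^ (r / p) = h ^ r := by
    rw [← Real.rpow_mul hh.le]
    congr 1
    field_simp
  have hq0 : p / r ≠ 0 := div_ne_zero hp0 hr0
  have hq0' : r / p ≠ 0 := div_ne_zero hr0 hp0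
  have hq1 : p / r - 1 ≠ 0 := by
    rw [sub_ne_zero]; exact fun hc => hpr (by field_simp at hc; linarith)
  have hq1' : r / p - 1 ≠ 0 := by
    rw [sub_ne_zero]; exact fun hc => hpr (by field_simp at hc; linarith)
  have hK1 : Kconst (h ^ r) (p / r) = Z⁻¹ * W ^ (p / r) := by
    rw [Kconst, hba']
    have f1 : (h ^ p - h ^ r) / ((p / r - 1) * (h ^ r - 1)) = Z⁻¹ := by
      rw [hZdef]
      field_simp
      ring
    have f2 : (p / r - 1) / (p / r) * ((h ^ p - 1) / (h ^ p - h ^ r)) = W := by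
      rw [hWdef]
      field_simp
    rw [f1, f2]
  have hK2 : Kconst (h ^ p) (r / p) = W⁻¹ * Z ^ (r / p) := by
    rw [Kconst, hab']
    have f1 : (h ^ r - h ^ p) / ((r / p - 1) * (h ^ p - 1)) = W⁻¹ := by
      rw [hWdef]
      field_simp
      ring
    have f2 : (r / p - 1) / (r / p) * ((h ^ r - 1) / (h ^ r - h ^ p)) = Z := by
      rw [hZdef]
      field_simp
    rw [f1, f2]
  rw [hK1, hK2]
  have p1 : 0 < Z⁻¹ * W ^ (p / r) := mul_pos (inv_pos.mpr hZpos) (Real.rpow_pos_of_pos hWpos _)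
  have p2 : 0 < W⁻¹ * Z ^ (r / p) := mul_pos (inv_pos.mpr hWpos) (Real.rpow_pos_of_pos hZpos _)
  rw [Real.rpow_def_of_pos p1, Real.rpow_def_of_pos p2]
  congr 1
  rw [Real.log_mul (inv_ne_zero hZpos.ne') (Real.rpow_pos_of_pos hWpos _).ne',
    Real.log_mul (inv_ne_zero hWpos.ne') (Real.rpow_pos_of_pos hZpos _).ne',
    Real.log_inv, Real.log_inv, Real.log_rpow hWpos, Real.log_rpow hZpos]
  field_simp
  ring
end

section
/- For h > 0 with h ≠ 1 and fixed p ≠ 0, the limit as r → 0 of K(h^r, p/r) equals the Specht ratio S(h^p), where S(h) = (h-1) * h^(1/(h-1)) / (e * log h). -/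
open scoped ComplexOrder Kronecker

/-!
Put `t = h ^ p`, so that `(h ^ r) ^ (p / r) = t`. For `r ≠ 0`,
`K(h^r, p/r) = (t - h^r) / ((p - r) (h^r - 1) / r) * g(r) ^ (p / r)` with
`g(r) = (1 - r/p) (t - 1) / (t - h^r)`. The first factor tends to `(t - 1) / log t`. Since
`g(0) = 1` and `g'(0) = -1/p + log h / (t - 1)`, the second tends to
`exp (p g'(0)) = exp (log t / (t - 1) - 1) = t ^ (1 / (t - 1)) / e`.
-/

open Filter Topology Real

theorem HasDerivAt.tendsto_div_self_of_eq_zero {f : ℝ → ℝ} {f' : ℝ} (hf : HasDerivAt f f' 0)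
    (h0 : f 0 = 0) : Tendsto (fun r => f r / r) (𝓝[≠] 0) (𝓝 f') := by
  simpa [h0, div_eq_inv_mul] using hf.tendsto_slope_zero

theorem HasDerivAt.tendsto_rpow_div_self {f : ℝ → ℝ} {f' : ℝ} (c : ℝ)
    (hf : HasDerivAt f f' 0) (h0 : f 0 = 1) :
    Tendsto (fun r => f r ^ (c / r)) (𝓝[≠] 0) (𝓝 (Real.exp (c * f'))) := by
  have hlog : Tendsto (fun r => Real.log (f r) / r) (𝓝[≠] 0) (𝓝 f') := by
    simpa [h0] using (hf.log (by simp [h0])).tendsto_div_self_of_eq_zero (by simp [h0])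
  have hpos : ∀ᶠ r in 𝓝[≠] 0, 0 < f r :=
    (hf.continuousAt.tendsto.eventually (lt_mem_nhds (h0 ▸ one_pos))).filter_mono
      nhdsWithin_le_nhds
  refine ((continuous_exp.tendsto _).comp (hlog.const_mul c)).congr' ?_
  filter_upwards [hpos] with r hr
  rw [Function.comp_apply, rpow_def_of_pos hr]
  ring_nf

theorem tendsto_rpow_sub_one_div {h : ℝ} (hh : 0 < h) :
    Tendsto (fun r => (h ^ r - 1) / r) (𝓝[≠] 0) (𝓝 (log h)) := by
  simpa using
    ((hasStrictDerivAt_const_rpow hh 0).hasDerivAt.sub_const 1).tendsto_div_self_of_eq_zero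
      (by simp)

theorem Specht_eq_exp {t : ℝ} (ht : 0 < t) (ht1 : t ≠ 1) :
    Specht t = (t - 1) / log t * exp (log t / (t - 1) - 1) := by
  rw [Specht, if_neg ht1, rpow_def_of_pos ht, exp_sub]
  field_simp

theorem Kconst_rpow_div {h p r : ℝ} (hh : 0 < h) (hp : p ≠ 0) (hr : r ≠ 0) :
    Kconst (h ^ r) (p / r) = (h ^ p - h ^ r) / ((p - r) * ((h ^ r - 1) / r)) *
      ((1 - r / p) * ((h ^ p - 1) / (h ^ p - h ^ r))) ^ (p / r) := by
  rw [Kconst, ← rpow_mul hh.le, mul_div_cancel₀ p hr]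
  congr 2 <;> field_simp

theorem hasDerivAt_kantorovich_base {h p t : ℝ} (hh : 0 < h) (ht : t ≠ 1) :
    HasDerivAt (fun r => (1 - r / p) * ((t - 1) / (t - h ^ r)))
      (-(1 / p) + log h / (t - 1)) 0 := by
  have ht' : t - 1 ≠ 0 := sub_ne_zero.mpr ht
  have hlin : HasDerivAt (fun r : ℝ => 1 - r / p) (-(1 / p)) 0 := by
    simpa using ((hasDerivAt_id (0 : ℝ)).div_const p).const_sub 1
  have hfrac : HasDerivAt (fun r : ℝ => (t - 1) / (t - h ^ r)) (log h / (t - 1)) 0 := by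
    refine ((hasDerivAt_const (0 : ℝ) (t - 1)).div
      ((hasStrictDerivAt_const_rpow hh 0).hasDerivAt.const_sub t)
      (by simpa using ht')).congr_deriv ?_
    simp
    field_simp
  refine (hlin.mul hfrac).congr_deriv ?_
  simp [div_self ht']

theorem kantorovich_tendsto_specht (h p : ℝ) (hh : 0 < h) (hh1 : h ≠ 1)
    (hp0 : p ≠ 0) :
    Filter.Tendsto (fun r : ℝ => Kconst (h ^ r) (p / r))
      (nhdsWithin 0 {(0 : ℝ)}ᶜ) (nhds (Specht (h ^ p))) := by
  have hL : log h ≠ 0 := log_ne_zero_of_pos_of_ne_one hh hh1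
  have hlog : log (h ^ p) = p * log h := log_rpow hh p
  have ht : h ^ p ≠ 1 := fun ht => mul_ne_zero hp0 hL (by rw [← hlog, ht, log_one])
  have hpow : Tendsto (fun r : ℝ => h ^ r) (𝓝[≠] 0) (𝓝 1) := by
    simpa using (continuousAt_const_rpow hh.ne' (b := 0)).tendsto.mono_left nhdsWithin_le_nhds
  have hsub : Tendsto (fun r : ℝ => p - r) (𝓝[≠] 0) (𝓝 p) := by
    simpa using ((continuous_sub_left p).tendsto 0).mono_left nhdsWithin_le_nhds
  have hfirst : Tendsto (fun r : ℝ => (h ^ p - h ^ r) / ((p - r) * ((h ^ r - 1) / r)))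
      (𝓝[≠] 0) (𝓝 ((h ^ p - 1) / (p * log h))) :=
    (tendsto_const_nhds.sub hpow).div (hsub.mul (tendsto_rpow_sub_one_div hh))
      (mul_ne_zero hp0 hL)
  have hsecond := (hasDerivAt_kantorovich_base (p := p) hh ht).tendsto_rpow_div_self p
    (by simp [div_self (sub_ne_zero.mpr ht)])
  have hK : (fun r => Kconst (h ^ r) (p / r)) =ᶠ[𝓝[≠] 0] _ :=
    eventually_mem_nhdsWithin.mono fun r hr => Kconst_rpow_div hh hp0 hr
  convert (hfirst.mul hsecond).congr' hK.symm using 2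
  rw [Specht_eq_exp (rpow_pos_of_pos hh p) ht, hlog]
  congr 2
  field_simp
  ring
end

section
/- If f : (0,∞) → (0,∞) is operator monotone decreasing on positive definite matrices, then for all positive definite matrices A, B and all t ∈ [0,1], f((1-t)A + tB) ≤ f(A) !_t f(B), where X !_t Y = ((1-t)X⁻¹ + tY⁻¹)⁻¹ is the weighted harmonic mean. -/
open scoped ComplexOrder Kronecker

/-!
With `g = 1 / f`, inverting both sides turns the claim into operator concavity of `g`, and `g` is
operator monotone because inversion is operator antitone. Concavity comes from a dilation: for the
self-adjoint unitary `W = !![a, b; b, -a]` with `a = √(1 - t)`, `b = √t`, the matrix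
`W * diag(A, B) * W` has upper-left block `(1 - t) A + t B` and is dominated by a block-diagonal
matrix with upper-left block `(1 - t) A + t B + δ`, so monotonicity of `g` in twice the dimension
gives `(1 - t) g(A) + t g(B) ≤ g((1 - t) A + t B + δ)`. As `g` is not assumed continuous, the slack
`δ` is removed by applying the same inequality to a small multiple of the identity and `A` and
dropping the positive term coming from the former, which gives `s g(A) ≤ g(s A + ε)` for `s < 1`,
and then letting `s → 1`.
-/

open Matrix Polynomial
open scoped MatrixOrder Matrix.Norms.L2Operator

lemma Polynomial.exists_eval_eq_on_finite {F : Type*} [Field F] (f : F → F) {s : Set F}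
    (hs : s.Finite) : ∃ p : F[X], ∀ x ∈ s, p.eval x = f x := by
  classical
  exact ⟨Lagrange.interpolate hs.toFinset id f, fun x hx =>
    Lagrange.eval_interpolate_at_node f (Set.injOn_id _) (hs.mem_toFinset.mpr hx)⟩

namespace Matrix

section RCLike

variable {𝕜 ι κ : Type*} [RCLike 𝕜]

lemma toBlocks₁₁_mono {Z Z' : Matrix (ι ⊕ κ) (ι ⊕ κ) 𝕜} (h : Z ≤ Z') :
    Z.toBlocks₁₁ ≤ Z'.toBlocks₁₁ :=
  (le_iff.mp h).submatrix Sum.inl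

lemma reindex_le_reindex_iff (e : ι ≃ κ) {A B : Matrix ι ι 𝕜} :
    reindex e e A ≤ reindex e e B ↔ A ≤ B := by
  rw [le_iff, le_iff]
  exact posSemidef_submatrix_equiv (M := B - A) e.symm

lemma PosDef.smul_add_smul {X Y : Matrix ι ι 𝕜} (hX : X.PosDef) (hY : Y.PosDef) {t : ℝ}
    (ht0 : 0 ≤ t) (ht1 : t ≤ 1) : ((1 - t) • X + t • Y).PosDef := by
  rcases ht1.lt_or_eq with ht1 | rfl
  · exact (hX.smul (sub_pos.2 ht1)).add_posSemidef (hY.posSemidef.smul ht0)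
  · simpa using hY

variable [Fintype ι] [DecidableEq ι] [Fintype κ] [DecidableEq κ]

lemma PosDef.fromBlocks_zero {X : Matrix ι ι 𝕜} {Y : Matrix κ κ 𝕜} (hX : X.PosDef)
    (hY : Y.PosDef) : (fromBlocks X 0 0 Y).PosDef := by
  have : Invertible X := hX.isUnit.invertible
  have hD := (hX.fromBlocks₁₁ 0 Y).2 (by simpa using hY.posSemidef)
  rw [conjTranspose_zero] at hD
  exact hD.posDef_iff_isUnit.2 (isUnit_fromBlocks_zero₂₁.2 ⟨hX.isUnit, hY.isUnit⟩)

lemma PosDef.exists_pos_smul_one_le {A : Matrix ι ι 𝕜} (hA : A.PosDef) :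
    ∃ r : ℝ, 0 < r ∧ r • (1 : Matrix ι ι 𝕜) ≤ A := by
  cases isEmpty_or_nonempty ι
  · exact ⟨1, one_pos, le_of_eq (Subsingleton.elim _ _)⟩
  simpa only [Algebra.algebraMap_eq_smul_one] using
    (CFC.exists_pos_algebraMap_le_iff hA.isHermitian.isSelfAdjoint).2 fun _ hx =>
      (isStrictlyPositive_iff_posDef.2 hA).spectrum_pos hx

lemma IsHermitian.cfc_eq_aeval {A : Matrix ι ι 𝕜} (hA : A.IsHermitian) {f : ℝ → ℝ} {p : ℝ[X]}
    (hp : ∀ x ∈ spectrum ℝ A, p.eval x = f x) : cfc f A = aeval A p := by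
  rw [← cfc_polynomial p A hA.isSelfAdjoint]
  exact cfc_congr fun x hx => (hp x hx).symm

lemma _root_.AlgHom.map_cfc_of_isHermitian (φ : Matrix ι ι 𝕜 →ₐ[ℝ] Matrix κ κ 𝕜) (f : ℝ → ℝ)
    {A : Matrix ι ι 𝕜} (hA : A.IsHermitian) (hφA : (φ A).IsHermitian) :
    φ (cfc f A) = cfc f (φ A) := by
  obtain ⟨p, hp⟩ := exists_eval_eq_on_finite f
    (A.finite_real_spectrum.union (φ A).finite_real_spectrum)
  rw [hA.cfc_eq_aeval fun x hx => hp x (.inl hx), hφA.cfc_eq_aeval fun x hx => hp x (.inr hx),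
    aeval_algHom_apply]

variable (ι κ) in
def fromBlocksDiagAlgHom (R α : Type*) [CommSemiring R] [Semiring α] [Algebra R α] :
    Matrix ι ι α × Matrix κ κ α →ₐ[R] Matrix (ι ⊕ κ) (ι ⊕ κ) α where
  toFun X := fromBlocks X.1 0 0 X.2
  map_one' := fromBlocks_one
  map_mul' X Y := by simp [fromBlocks_multiply]
  map_zero' := by simp
  map_add' X Y := by simp [fromBlocks_add]
  commutes' r := by simp [Algebra.algebraMap_eq_smul_one, ← fromBlocks_one, fromBlocks_smul]

lemma cfc_fromBlocks_diag (f : ℝ → ℝ) {X : Matrix ι ι 𝕜} {Y : Matrix κ κ 𝕜}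
    (hX : X.IsHermitian) (hY : Y.IsHermitian) :
    cfc f (fromBlocks X 0 0 Y) = fromBlocks (cfc f X) 0 0 (cfc f Y) := by
  have hD : (fromBlocks X 0 0 Y).IsHermitian := hX.fromBlocks (by simp) hY
  obtain ⟨p, hp⟩ := exists_eval_eq_on_finite f ((X.finite_real_spectrum.union
    Y.finite_real_spectrum).union (fromBlocks X 0 0 Y).finite_real_spectrum)
  rw [hX.cfc_eq_aeval fun x hx => hp x (.inl (.inl hx)),
    hY.cfc_eq_aeval fun x hx => hp x (.inl (.inr hx)), hD.cfc_eq_aeval fun x hx => hp x (.inr hx)]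
  exact (aeval_algHom_apply (fromBlocksDiagAlgHom ι κ ℝ 𝕜) (X, Y) p).trans
    (by rw [aeval_prod_apply]; rfl)

lemma cfc_unitary_conj (f : ℝ → ℝ) {U : Matrix ι ι 𝕜} (hU : U ∈ unitaryGroup ι 𝕜)
    {X : Matrix ι ι 𝕜} (hX : X.IsHermitian) :
    cfc f (U * X * star U) = U * cfc f X * star U :=
  ((Unitary.conjStarAlgAut ℝ _ ⟨U, hU⟩).toAlgEquiv.toAlgHom.map_cfc_of_isHermitian f hX
    (by simpa [star_eq_conjTranspose] using isHermitian_mul_mul_conjTranspose U hX)).symm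

lemma cfc_reindex (f : ℝ → ℝ) (e : ι ≃ κ) {A : Matrix ι ι 𝕜} (hA : A.IsHermitian) :
    cfc f (reindex e e A) = reindex e e (cfc f A) :=
  ((reindexAlgEquiv ℝ 𝕜 e).toAlgHom.map_cfc_of_isHermitian f hA (hA.submatrix _)).symm

lemma PosDef.posDef_cfc {A : Matrix ι ι 𝕜} (hA : A.PosDef) {f : ℝ → ℝ}
    (hf : ∀ x, 0 < x → 0 < f x) : (cfc f A).PosDef :=
  isStrictlyPositive_iff_posDef.1 <| (cfc_isStrictlyPositive_iff f A
    (A.finite_real_spectrum.continuousOn f) hA.isHermitian.isSelfAdjoint).2 fun _ hx =>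
      hf _ ((isStrictlyPositive_iff_posDef.2 hA).spectrum_pos hx)

lemma PosDef.cfc_inv {A : Matrix ι ι 𝕜} (hA : A.PosDef) {f : ℝ → ℝ}
    (hf : ∀ x, 0 < x → 0 < f x) : cfc (fun x => (f x)⁻¹) A = (cfc f A)⁻¹ := by
  rw [nonsing_inv_eq_ringInverse]
  exact _root_.cfc_inv f A
    (fun _ hx => (hf _ ((isStrictlyPositive_iff_posDef.2 hA).spectrum_pos hx)).ne')
    (A.finite_real_spectrum.continuousOn f) hA.isHermitian.isSelfAdjoint

end RCLike

section Complex

variable {ι : Type*} [Fintype ι] [DecidableEq ι]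

lemma PosDef.of_le {A B : Matrix ι ι ℂ} (hA : A.PosDef) (hAB : A ≤ B) : B.PosDef :=
  isStrictlyPositive_iff_posDef.1 ((isStrictlyPositive_iff_posDef.2 hA).of_le hAB)

lemma PosDef.inv_le_inv {A B : Matrix ι ι ℂ} (hA : A.PosDef) (hAB : A ≤ B) : B⁻¹ ≤ A⁻¹ := by
  simpa only [nonsing_inv_eq_ringInverse] using
    CStarAlgebra.ringInverse_le_ringInverse hAB (isStrictlyPositive_iff_posDef.2 hA)

lemma exists_posSemidef_fromBlocks_smul_one (C : Matrix ι ι ℂ) {δ : ℝ} (hδ : 0 < δ) :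
    ∃ r : ℝ, (fromBlocks (δ • 1) C Cᴴ (r • 1)).PosSemidef := by
  have hδ1 : (δ • (1 : Matrix ι ι ℂ)).PosDef := PosDef.one.smul hδ
  have : Invertible (δ • (1 : Matrix ι ι ℂ)) := hδ1.isUnit.invertible
  refine ⟨δ⁻¹ * ‖C‖ ^ 2, (hδ1.fromBlocks₁₁ C _).2 ?_⟩
  have hinv : (δ • (1 : Matrix ι ι ℂ))⁻¹ = δ⁻¹ • 1 :=
    inv_eq_left_inv (by simp [smul_smul, hδ.ne'])
  have hschur : (δ⁻¹ * ‖C‖ ^ 2) • 1 - Cᴴ * (δ⁻¹ • 1) * C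
      = δ⁻¹ • (algebraMap ℝ (Matrix ι ι ℂ) (‖C‖ ^ 2) - star C * C) := by
    rw [Algebra.algebraMap_eq_smul_one, smul_sub, smul_smul, star_eq_conjTranspose]
    simp
  rw [hinv, hschur]
  exact (le_iff.mp CStarAlgebra.star_mul_le_algebraMap_norm_sq).smul (inv_nonneg.2 hδ.le)

lemma exists_fromBlocks_le_fromBlocks_add {C : Matrix ι ι ℂ} (hC : C.IsHermitian)
    (M N : Matrix ι ι ℂ) {δ : ℝ} (hδ : 0 < δ) :
    ∃ r : ℝ, fromBlocks M C C N ≤ fromBlocks (M + δ • 1) 0 0 (N + r • 1) := by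
  obtain ⟨r, hr⟩ := exists_posSemidef_fromBlocks_smul_one (-C) hδ
  have hdiff : fromBlocks (M + δ • 1) 0 0 (N + r • 1) - fromBlocks M C C N
      = fromBlocks (δ • 1) (-C) (-C)ᴴ (r • 1) := by
    rw [sub_eq_add_neg, fromBlocks_neg, fromBlocks_add, conjTranspose_neg, hC.eq]
    congr 1 <;> abel
  exact ⟨r, le_iff.2 (hdiff ▸ hr)⟩

end Complex

section BlockReflection

variable {ι : Type*} [DecidableEq ι]

noncomputable def blockReflection (a b : ℝ) : Matrix (ι ⊕ ι) (ι ⊕ ι) ℂ :=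
  fromBlocks (a • 1) (b • 1) (b • 1) (-(a • 1))

lemma star_blockReflection (a b : ℝ) :
    star (blockReflection (ι := ι) a b) = blockReflection a b := by
  simp [blockReflection, star_eq_conjTranspose, fromBlocks_conjTranspose]

variable [Fintype ι]

lemma blockReflection_mul_fromBlocks_mul (a b : ℝ) (P Q : Matrix ι ι ℂ) :
    blockReflection a b * fromBlocks P 0 0 Q * blockReflection a b =
      fromBlocks ((a * a) • P + (b * b) • Q) ((a * b) • (P - Q))
        ((a * b) • (P - Q)) ((b * b) • P + (a * a) • Q) := by
  simp only [blockReflection, fromBlocks_multiply, Matrix.smul_mul, Matrix.mul_smul,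
    Matrix.one_mul, Matrix.mul_one, Matrix.mul_zero, add_zero, zero_add, Matrix.neg_mul,
    Matrix.mul_neg, smul_neg, neg_neg, smul_smul]
  congr 1 <;> module

lemma blockReflection_mem_unitaryGroup {a b : ℝ} (hab : a * a + b * b = 1) :
    blockReflection (ι := ι) a b ∈ unitaryGroup (ι ⊕ ι) ℂ := by
  have h : blockReflection (ι := ι) a b * blockReflection a b
      = blockReflection a b * fromBlocks 1 0 0 1 * blockReflection a b := by
    rw [fromBlocks_one, Matrix.mul_one]
  rw [mem_unitaryGroup_iff, star_blockReflection, h, blockReflection_mul_fromBlocks_mul]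
  simp [← add_smul, hab, add_comm (b * b), fromBlocks_one]

end BlockReflection

end Matrix

def IsOperatorMonotone (g : ℝ → ℝ) : Prop :=
  ∀ ⦃ι : Type⦄ [Fintype ι] [DecidableEq ι] ⦃A B : Matrix ι ι ℂ⦄,
    A.PosDef → B.PosDef → A ≤ B → cfc g A ≤ cfc g B

lemma isOperatorMonotone_inv_of_antitone {f : ℝ → ℝ} (hf_pos : ∀ x, 0 < x → 0 < f x)
    (hf_dec : ∀ (m : ℕ) (A B : Matrix (Fin m) (Fin m) ℂ),
      A.PosDef → B.PosDef → LoewnerLE A B → LoewnerLE (cfc f B) (cfc f A)) :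
    IsOperatorMonotone fun x => (f x)⁻¹ := by
  intro ι _ _ A B hA hB hAB
  let e := Fintype.equivFin ι
  have hfBA : cfc f B ≤ cfc f A := by
    rw [← reindex_le_reindex_iff e, ← cfc_reindex f e hA.isHermitian,
      ← cfc_reindex f e hB.isHermitian]
    exact hf_dec _ _ _ (hA.submatrix e.symm.injective) (hB.submatrix e.symm.injective)
      ((reindex_le_reindex_iff e).2 hAB)
  rw [hA.cfc_inv hf_pos, hB.cfc_inv hf_pos]
  exact (hB.posDef_cfc hf_pos).inv_le_inv hfBA

namespace IsOperatorMonotone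

variable {g : ℝ → ℝ} {ι : Type} [Fintype ι] [DecidableEq ι]

theorem smul_add_smul_le_cfc_add (hg : IsOperatorMonotone g) {X Y : Matrix ι ι ℂ}
    (hX : X.PosDef) (hY : Y.PosDef) {t δ : ℝ} (ht0 : 0 ≤ t) (ht1 : t ≤ 1) (hδ : 0 < δ) :
    (1 - t) • cfc g X + t • cfc g Y ≤ cfc g ((1 - t) • X + t • Y + δ • 1) := by
  obtain ⟨a, haa⟩ : ∃ a : ℝ, a * a = 1 - t := ⟨√(1 - t), Real.mul_self_sqrt (by linarith)⟩
  obtain ⟨b, hbb⟩ : ∃ b : ℝ, b * b = t := ⟨√t, Real.mul_self_sqrt ht0⟩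
  set W : Matrix (ι ⊕ ι) (ι ⊕ ι) ℂ := blockReflection a b
  have hW : W ∈ unitaryGroup (ι ⊕ ι) ℂ := blockReflection_mem_unitaryGroup (by linarith)
  have hWstar : star W = W := star_blockReflection a b
  have hC : ((a * b) • (X - Y)).IsHermitian :=
    (hX.isHermitian.sub hY.isHermitian).smul (IsSelfAdjoint.all _)
  obtain ⟨r, hTD⟩ := exists_fromBlocks_le_fromBlocks_add hC ((1 - t) • X + t • Y)
    (t • X + (1 - t) • Y) hδ
  have hT : W * fromBlocks X 0 0 Y * star W
      = fromBlocks ((1 - t) • X + t • Y) ((a * b) • (X - Y)) ((a * b) • (X - Y))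
        (t • X + (1 - t) • Y) := by
    rw [hWstar, blockReflection_mul_fromBlocks_mul, haa, hbb]
  rw [← hT] at hTD
  have hTpd : (W * fromBlocks X 0 0 Y * star W).PosDef :=
    (IsUnit.posDef_star_right_conjugate_iff (Unitary.toUnits ⟨W, hW⟩).isUnit).2
      (hX.fromBlocks_zero hY)
  have hDpd := hTpd.of_le hTD
  obtain ⟨hM, -, -, hN⟩ := isHermitian_fromBlocks_iff.1 hDpd.isHermitian
  have h := toBlocks₁₁_mono (hg hTpd hDpd hTD)
  rwa [cfc_unitary_conj g hW (hX.fromBlocks_zero hY).isHermitian,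
    cfc_fromBlocks_diag _ hX.isHermitian hY.isHermitian, hWstar,
    blockReflection_mul_fromBlocks_mul, toBlocks_fromBlocks₁₁, cfc_fromBlocks_diag _ hM hN,
    toBlocks_fromBlocks₁₁, haa, hbb] at h

theorem smul_cfc_le_cfc_smul_add (hg : IsOperatorMonotone g) (hg_pos : ∀ x, 0 < x → 0 < g x)
    {A : Matrix ι ι ℂ} (hA : A.PosDef) {s ε : ℝ} (hs0 : 0 < s) (hs1 : s < 1) (hε : 0 < ε) :
    s • cfc g A ≤ cfc g (s • A + ε • 1) := by
  obtain ⟨c, hc, hcs⟩ : ∃ c : ℝ, 0 < c ∧ (1 - s) * c = ε / 2 :=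
    ⟨ε / (2 * (1 - s)), div_pos hε (by linarith), by field_simp [(sub_pos.2 hs1).ne']⟩
  have key := hg.smul_add_smul_le_cfc_add (PosDef.one.smul hc) hA hs0.le hs1.le (half_pos hε)
  have harg : (1 - s) • c • (1 : Matrix ι ι ℂ) + s • A + (ε / 2) • 1 = s • A + ε • 1 := by
    rw [smul_smul, hcs]
    module
  have hgc : 0 ≤ (1 - s) • cfc g (c • (1 : Matrix ι ι ℂ)) := by
    rw [← Algebra.algebraMap_eq_smul_one, cfc_algebraMap, Algebra.algebraMap_eq_smul_one]
    exact nonneg_iff_posSemidef.2 ((PosSemidef.one.smul (hg_pos c hc).le).smul (by linarith))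
  rw [harg] at key
  exact (le_add_of_nonneg_left hgc).trans key

theorem smul_add_smul_le_cfc (hg : IsOperatorMonotone g) (hg_pos : ∀ x, 0 < x → 0 < g x)
    {A B : Matrix ι ι ℂ} (hA : A.PosDef) (hB : B.PosDef) {t : ℝ} (ht0 : 0 ≤ t) (ht1 : t ≤ 1) :
    (1 - t) • cfc g A + t • cfc g B ≤ cfc g ((1 - t) • A + t • B) := by
  set M := (1 - t) • A + t • B
  set P := (1 - t) • cfc g A + t • cfc g B
  have hM : M.PosDef := hA.smul_add_smul hB ht0 ht1
  have key : ∀ s ∈ Set.Ioo (0 : ℝ) 1, s • P ≤ cfc g M := by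
    rintro s ⟨hs0, hs1⟩
    obtain ⟨r, hr, hrM⟩ := (hM.smul (sub_pos.2 hs1)).exists_pos_smul_one_le
    have hε : 0 < r / 2 := half_pos hr
    have hsA := (hA.smul hs0).add_posSemidef (PosSemidef.one.smul hε.le)
    have hsB := (hB.smul hs0).add_posSemidef (PosSemidef.one.smul hε.le)
    calc s • P = (1 - t) • (s • cfc g A) + t • (s • cfc g B) := by module
      _ ≤ (1 - t) • cfc g (s • A + (r / 2) • 1) + t • cfc g (s • B + (r / 2) • 1) :=
        add_le_add
          (smul_le_smul_of_nonneg_left (hg.smul_cfc_le_cfc_smul_add hg_pos hA hs0 hs1 hε)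
            (by linarith))
          (smul_le_smul_of_nonneg_left (hg.smul_cfc_le_cfc_smul_add hg_pos hB hs0 hs1 hε) ht0)
      _ ≤ cfc g ((1 - t) • (s • A + (r / 2) • 1) + t • (s • B + (r / 2) • 1) + (r / 2) • 1) :=
        hg.smul_add_smul_le_cfc_add hsA hsB ht0 ht1 hε
      _ = cfc g (s • M + r • 1) := by congr 1; module
      _ ≤ cfc g M := by
        refine hg ((hM.smul hs0).add_posSemidef (PosSemidef.one.smul hr.le)) hM ?_
        calc s • M + r • 1 ≤ s • M + (1 - s) • M := add_le_add le_rfl hrM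
          _ = M := by module
  have hlim : Filter.Tendsto (fun s : ℝ => s • P) (nhdsWithin 1 (Set.Iio 1)) (nhds P) := by
    simpa only [one_smul, id_eq] using
      (tendsto_nhdsWithin_of_tendsto_nhds (Filter.tendsto_id (x := nhds (1 : ℝ)))).smul_const P
  exact le_of_tendsto hlim (Filter.eventually_of_mem (Ioo_mem_nhdsLT one_pos) key)

end IsOperatorMonotone

theorem opMonotoneDecreasing_harmonic_mean (f : ℝ → ℝ)
    (hf_pos : ∀ x : ℝ, 0 < x → 0 < f x)
    (hf_dec : ∀ (m : ℕ) (A B : Matrix (Fin m) (Fin m) ℂ),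
      A.PosDef → B.PosDef → LoewnerLE A B → LoewnerLE (cfc f B) (cfc f A))
    (n : ℕ) (A B : Matrix (Fin n) (Fin n) ℂ) (hA : A.PosDef) (hB : B.PosDef)
    (t : ℝ) (ht0 : 0 ≤ t) (ht1 : t ≤ 1) :
    LoewnerLE (cfc f ((1 - t) • A + t • B))
      (((1 - t) • (cfc f A)⁻¹ + t • (cfc f B)⁻¹)⁻¹) := by
  have hM := hA.smul_add_smul hB ht0 ht1
  have hconcave := (isOperatorMonotone_inv_of_antitone hf_pos hf_dec).smul_add_smul_le_cfc
    (fun x hx => inv_pos.2 (hf_pos x hx)) hA hB ht0 ht1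
  rw [hA.cfc_inv hf_pos, hB.cfc_inv hf_pos, hM.cfc_inv hf_pos] at hconcave
  have h := ((hA.posDef_cfc hf_pos).inv.smul_add_smul (hB.posDef_cfc hf_pos).inv ht0
    ht1).inv_le_inv hconcave
  rwa [nonsing_inv_nonsing_inv _ ((isUnit_iff_isUnit_det _).1 (hM.posDef_cfc hf_pos).isUnit)] at h
end

section
/- For positive definite matrices X, Y, Z, W of the same size, the geometric mean of harmonic means is dominated by the harmonic mean of geometric means: (X ! Y) # (Z ! W) ≤ (X # Z) ! (Y # W), where A ! B = 2(A⁻¹ + B⁻¹)⁻¹ is the harmonic mean and A # B = A^{1/2}(A^{-1/2} B A^{-1/2})^{1/2} A^{1/2} is the geometric mean. -/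
/-!
Since `#` commutes with inversion and is positively homogeneous,
`(X ! Y) # (Z ! W) = 2 ((X⁻¹ + Y⁻¹) # (Z⁻¹ + W⁻¹))⁻¹`; as inversion is order-reversing, it suffices
to show `X⁻¹ # Z⁻¹ + Y⁻¹ # W⁻¹ ≤ (X⁻¹ + Y⁻¹) # (Z⁻¹ + W⁻¹)`, i.e. superadditivity of `#`.

All of this comes from one characterisation: `a # b` is the largest self-adjoint `s` with
`s a⁻¹ s ≤ b`, and the only positive `g` with `g a⁻¹ g = b`. After conjugating by `a^{-1/2}` this is
the operator monotonicity of the square root. Superadditivity then follows from the joint convexity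
of `(x, a) ↦ x⋆ a⁻¹ x`. The argument works in any unital C⋆-algebra.
-/

open scoped ComplexOrder Kronecker

/-- The harmonic mean `A ! B = 2 (A⁻¹ + B⁻¹)⁻¹`. -/
noncomputable def harm {n : Type*} [Fintype n] [DecidableEq n]
    (A B : Matrix n n ℂ) : Matrix n n ℂ :=
  (2 : ℝ) • (A⁻¹ + B⁻¹)⁻¹

namespace Ring

lemma inverse_eq_of_mul_eq_one {M₀ : Type*} [MonoidWithZero M₀] {u v : M₀} (hu : IsUnit u)
    (h : u * v = 1) : u⁻¹ʳ = v := by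
  simpa using (inverse_mul_eq_iff_eq_mul u 1 v hu).2 h.symm

lemma inverse_smul {𝕜 R : Type*} [Field 𝕜] [Ring R] [Algebra 𝕜 R] {c : 𝕜} (hc : c ≠ 0)
    {a : R} (ha : IsUnit a) : (c • a)⁻¹ʳ = c⁻¹ • a⁻¹ʳ :=
  inverse_eq_of_mul_eq_one
    (show IsUnit (c • a) from (isUnit_smul_iff (Units.mk0 c hc) a).2 ha) <| by
    rw [smul_mul_smul_comm, mul_inv_cancel₀ hc, mul_inverse_cancel _ ha, one_smul]

end Ring

namespace CStarAlgebra

open CFC Ring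

variable {A : Type*} [CStarAlgebra A] [PartialOrder A] [StarOrderedRing A]

lemma le_of_mul_self_le_mul_self {a b : A} (ha : IsSelfAdjoint a) (hb : 0 ≤ b)
    (h : a * a ≤ b * b) : a ≤ b :=
  calc a ≤ CFC.abs a := sub_nonneg.1 (abs_sub_self a ▸ smul_nonneg zero_le_two (negPart_nonneg a))
    _ = sqrt (a * a) := by rw [CFC.abs, ha.star_eq]
    _ ≤ sqrt (b * b) := sqrt_le_sqrt _ _ h
    _ = b := sqrt_mul_self b

lemma rpow_neg_half_mul_rpow_neg_half {a : A} (ha : IsStrictlyPositive a) :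
    a ^ (-(1 / 2) : ℝ) * a ^ (-(1 / 2) : ℝ) = a⁻¹ʳ := by
  rw [← rpow_add ha.isUnit, inverse_eq_rpow_neg_one]
  norm_num

/-- Conjugating by `r = a ^ (-1/2)` turns the hypothesis into `(r s r)² ≤ (r g r)²`. -/
lemma le_of_mul_inverse_mul_le {a s g : A} (ha : IsStrictlyPositive a) (hs : IsSelfAdjoint s)
    (hg : 0 ≤ g) (h : s * a⁻¹ʳ * s ≤ g * a⁻¹ʳ * g) : s ≤ g := by
  have hqr : a ^ (1 / 2 : ℝ) * a ^ (-(1 / 2) : ℝ) = 1 := rpow_mul_rpow_neg _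
  have hrq : a ^ (-(1 / 2) : ℝ) * a ^ (1 / 2 : ℝ) = 1 := rpow_neg_mul_rpow _
  have hq : IsSelfAdjoint (a ^ (1 / 2 : ℝ)) := rpow_nonneg.isSelfAdjoint
  have hr : IsSelfAdjoint (a ^ (-(1 / 2) : ℝ)) := rpow_nonneg.isSelfAdjoint
  rw [← rpow_neg_half_mul_rpow_neg_half ha] at h
  set q := a ^ (1 / 2 : ℝ)
  set r := a ^ (-(1 / 2) : ℝ)
  have hsq : ∀ x : A, r * x * r * (r * x * r) = r * (x * (r * r) * x) * r := fun x => by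
    noncomm_ring
  have hundo : ∀ x : A, q * (r * x * r) * q = x := fun x =>
    calc _ = q * r * x * (r * q) := by noncomm_ring
      _ = x := by rw [hqr, hrq, one_mul, mul_one]
  have hconj : r * s * r ≤ r * g * r := by
    refine le_of_mul_self_le_mul_self (by simpa only [hr.star_eq] using hs.conjugate r)
      (hr.conjugate_nonneg hg) ?_
    rw [hsq, hsq]
    exact hr.conjugate_le_conjugate h
  simpa only [hundo] using hq.conjugate_le_conjugate hconj

/-- Sum the nonnegative terms `(x - a k z)⋆ a⁻¹ (x - a k z)` and `(y - b k z)⋆ b⁻¹ (y - b k z)`,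
where `k = (a + b)⁻¹` and `z = x + y`. -/
lemma star_mul_inverse_mul_add_le {a b x y : A} (ha : IsStrictlyPositive a)
    (hb : IsStrictlyPositive b) :
    star (x + y) * (a + b)⁻¹ʳ * (x + y) ≤ star x * a⁻¹ʳ * x + star y * b⁻¹ʳ * y := by
  have hab : IsStrictlyPositive (a + b) := ha.add_nonneg hb.nonneg
  set k := (a + b)⁻¹ʳ
  set z := x + y
  have hk : IsSelfAdjoint k := hab.ringInverse.isSelfAdjoint
  have expand : ∀ p w : A, IsStrictlyPositive p →
      star (w - p * k * z) * p⁻¹ʳ * (w - p * k * z) =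
        star w * p⁻¹ʳ * w - star w * k * z - star z * k * w + star z * k * p * k * z := by
    intro p w hp
    simp only [star_sub, star_mul, hp.isSelfAdjoint.star_eq, hk.star_eq, sub_mul, mul_sub,
      mul_assoc, inverse_mul_cancel_left _ _ hp.isUnit, mul_inverse_cancel_left _ _ hp.isUnit]
    abel
  have hsum : star z * k * a * k * z + star z * k * b * k * z = star z * k * z :=
    calc _ = star z * (k * ((a + b) * k)) * z := by noncomm_ring
      _ = star z * k * z := by rw [mul_inverse_cancel _ hab.isUnit, mul_one]
  have h0 := add_nonneg
    (star_left_conjugate_nonneg ha.ringInverse.nonneg (x - a * k * z))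
    (star_left_conjugate_nonneg hb.ringInverse.nonneg (y - b * k * z))
  rw [expand a x ha, expand b y hb] at h0
  rw [← sub_nonneg]
  calc (0 : A) ≤ _ := h0
    _ = star x * a⁻¹ʳ * x + star y * b⁻¹ʳ * y - star z * k * z - star z * k * z
          + (star z * k * a * k * z + star z * k * b * k * z) := by
      simp only [z, star_add, mul_add, add_mul]
      abel
    _ = _ := by rw [hsum]; abel

noncomputable def geomMean (a b : A) : A :=
  a ^ (1 / 2 : ℝ) * (a ^ (-(1 / 2) : ℝ) * b * a ^ (-(1 / 2) : ℝ)) ^ (1 / 2 : ℝ) * a ^ (1 / 2 : ℝ)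

lemma geomMean_nonneg (a b : A) : 0 ≤ geomMean a b :=
  rpow_nonneg.isSelfAdjoint.conjugate_nonneg rpow_nonneg

lemma isStrictlyPositive_geomMean {a b : A} (ha : IsStrictlyPositive a)
    (hb : IsStrictlyPositive b) : IsStrictlyPositive (geomMean a b) := by
  have hc := IsStrictlyPositive.conjugate_of_isUnit_of_isSelfAdjoint b _
    (ha.rpow a (-(1 / 2))).isUnit
  exact .conjugate_of_isUnit_of_isSelfAdjoint _ _ (ha.rpow a (1 / 2)).isUnit
    (ha := hc.rpow _ (1 / 2))

lemma geomMean_mul_inverse_mul_self {a b : A} (ha : IsStrictlyPositive a) (hb : 0 ≤ b) :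
    geomMean a b * a⁻¹ʳ * geomMean a b = b := by
  have hqr : a ^ (1 / 2 : ℝ) * a ^ (-(1 / 2) : ℝ) = 1 := rpow_mul_rpow_neg _
  have hrq : a ^ (-(1 / 2) : ℝ) * a ^ (1 / 2 : ℝ) = 1 := rpow_neg_mul_rpow _
  have hss := sqrt_mul_sqrt_self _ (rpow_nonneg.isSelfAdjoint.conjugate_nonneg hb :
    0 ≤ a ^ (-(1 / 2) : ℝ) * b * a ^ (-(1 / 2) : ℝ))
  rw [sqrt_eq_rpow] at hss
  rw [geomMean, ← rpow_neg_half_mul_rpow_neg_half ha]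
  set q := a ^ (1 / 2 : ℝ)
  set r := a ^ (-(1 / 2) : ℝ)
  set s := (r * b * r) ^ (1 / 2 : ℝ)
  calc q * s * q * (r * r) * (q * s * q) = q * s * (q * r) * (r * q) * s * q := by noncomm_ring
    _ = q * (s * s) * q := by rw [hqr, hrq]; noncomm_ring
    _ = q * r * b * (r * q) := by rw [hss]; noncomm_ring
    _ = b := by rw [hqr, hrq, one_mul, mul_one]

lemma le_geomMean_of_mul_inverse_mul_le {a b s : A} (ha : IsStrictlyPositive a) (hb : 0 ≤ b)
    (hs : IsSelfAdjoint s) (h : s * a⁻¹ʳ * s ≤ b) : s ≤ geomMean a b :=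
  le_of_mul_inverse_mul_le ha hs (geomMean_nonneg a b)
    (by rwa [geomMean_mul_inverse_mul_self ha hb])

lemma eq_geomMean_of_mul_inverse_mul_self {a b g : A} (ha : IsStrictlyPositive a) (hg : 0 ≤ g)
    (h : g * a⁻¹ʳ * g = b) : g = geomMean a b := by
  have hb : 0 ≤ b := h ▸ hg.isSelfAdjoint.conjugate_nonneg ha.ringInverse.nonneg
  refine le_antisymm (le_geomMean_of_mul_inverse_mul_le ha hb hg.isSelfAdjoint h.le)
    (le_of_mul_inverse_mul_le ha (geomMean_nonneg a b).isSelfAdjoint hg ?_)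
  rw [geomMean_mul_inverse_mul_self ha hb, h]

lemma geomMean_inverse {a b : A} (ha : IsStrictlyPositive a) (hb : IsStrictlyPositive b) :
    geomMean a⁻¹ʳ b⁻¹ʳ = (geomMean a b)⁻¹ʳ := by
  have hg := isStrictlyPositive_geomMean ha hb
  refine (eq_geomMean_of_mul_inverse_mul_self ha.ringInverse hg.ringInverse.nonneg ?_).symm
  rw [inverse_inverse ha.isUnit, eq_comm]
  refine inverse_eq_of_mul_eq_one hb.isUnit ?_
  calc b * ((geomMean a b)⁻¹ʳ * a * (geomMean a b)⁻¹ʳ)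
      = geomMean a b * a⁻¹ʳ * geomMean a b * ((geomMean a b)⁻¹ʳ * a * (geomMean a b)⁻¹ʳ) := by
        rw [geomMean_mul_inverse_mul_self ha hb.nonneg]
    _ = 1 := by
      simp only [mul_assoc, mul_inverse_cancel_left _ _ hg.isUnit,
        inverse_mul_cancel_left _ _ ha.isUnit, mul_inverse_cancel _ hg.isUnit]

lemma geomMean_smul {c : ℝ} (hc : 0 < c) {a b : A} (ha : IsStrictlyPositive a) (hb : 0 ≤ b) :
    geomMean (c • a) (c • b) = c • geomMean a b := by
  refine (eq_geomMean_of_mul_inverse_mul_self (ha.smul hc)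
    (smul_nonneg hc.le (geomMean_nonneg a b)) ?_).symm
  rw [inverse_smul hc.ne' ha.isUnit, smul_mul_smul_comm, smul_mul_smul_comm,
    geomMean_mul_inverse_mul_self ha hb, mul_inv_cancel₀ hc.ne', one_mul]

lemma geomMean_add_geomMean_le {a₁ b₁ a₂ b₂ : A} (ha₁ : IsStrictlyPositive a₁)
    (hb₁ : 0 ≤ b₁) (ha₂ : IsStrictlyPositive a₂) (hb₂ : 0 ≤ b₂) :
    geomMean a₁ b₁ + geomMean a₂ b₂ ≤ geomMean (a₁ + a₂) (b₁ + b₂) := by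
  have hg₁ := (geomMean_nonneg a₁ b₁).isSelfAdjoint
  have hg₂ := (geomMean_nonneg a₂ b₂).isSelfAdjoint
  refine le_geomMean_of_mul_inverse_mul_le (ha₁.add_nonneg ha₂.nonneg) (add_nonneg hb₁ hb₂)
    (hg₁.add hg₂) ?_
  calc _ = star (geomMean a₁ b₁ + geomMean a₂ b₂) * (a₁ + a₂)⁻¹ʳ *
        (geomMean a₁ b₁ + geomMean a₂ b₂) := by rw [(hg₁.add hg₂).star_eq]
    _ ≤ _ := star_mul_inverse_mul_add_le ha₁ ha₂
    _ = b₁ + b₂ := by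
      rw [hg₁.star_eq, hg₂.star_eq, geomMean_mul_inverse_mul_self ha₁ hb₁,
        geomMean_mul_inverse_mul_self ha₂ hb₂]

noncomputable def harmMean (a b : A) : A := (2 : ℝ) • (a⁻¹ʳ + b⁻¹ʳ)⁻¹ʳ

lemma isStrictlyPositive_harmMean {a b : A} (ha : IsStrictlyPositive a)
    (hb : IsStrictlyPositive b) : IsStrictlyPositive (harmMean a b) :=
  (ha.ringInverse.add_nonneg hb.ringInverse.nonneg).ringInverse.smul two_pos

theorem geomMean_harmMean_le_harmMean_geomMean {x y z w : A} (hx : IsStrictlyPositive x)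
    (hy : IsStrictlyPositive y) (hz : IsStrictlyPositive z) (hw : IsStrictlyPositive w) :
    geomMean (harmMean x y) (harmMean z w) ≤ harmMean (geomMean x z) (geomMean y w) := by
  have hp := hx.ringInverse.add_nonneg hy.ringInverse.nonneg
  have hq := hz.ringInverse.add_nonneg hw.ringInverse.nonneg
  have hsum : (geomMean x z)⁻¹ʳ + (geomMean y w)⁻¹ʳ ≤ geomMean (x⁻¹ʳ + y⁻¹ʳ) (z⁻¹ʳ + w⁻¹ʳ) := by
    rw [← geomMean_inverse hx hz, ← geomMean_inverse hy hw]
    exact geomMean_add_geomMean_le hx.ringInverse hz.ringInverse.nonneg hy.ringInverse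
      hw.ringInverse.nonneg
  have hpos := (isStrictlyPositive_geomMean hx hz).ringInverse.add_nonneg
    (isStrictlyPositive_geomMean hy hw).ringInverse.nonneg
  rw [harmMean, harmMean, harmMean, geomMean_smul two_pos hp.ringInverse hq.ringInverse.nonneg,
    geomMean_inverse hp hq]
  exact smul_le_smul_of_nonneg_left (ringInverse_le_ringInverse hsum hpos) zero_le_two

end CStarAlgebra

section Matrix

open scoped MatrixOrder Matrix.Norms.L2Operator
open CStarAlgebra

variable {n : Type*} [Fintype n] [DecidableEq n]

lemma mpow_eq_rpow {A : Matrix n n ℂ} (hA : 0 ≤ A) (p : ℝ) : mpow A p = A ^ p :=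
  (CFC.rpow_eq_cfc_real hA).symm

lemma geo_eq_geomMean {A B : Matrix n n ℂ} (hA : 0 ≤ A) (hB : 0 ≤ B) :
    geo A B = geomMean A B := by
  have hC : 0 ≤ mpow A (-(1 / 2)) * B * mpow A (-(1 / 2)) := by
    rw [mpow_eq_rpow hA]
    exact CFC.rpow_nonneg.isSelfAdjoint.conjugate_nonneg hB
  rw [geo, mpow_eq_rpow hC, mpow_eq_rpow hA, mpow_eq_rpow hA, geomMean]

lemma harm_eq_harmMean (A B : Matrix n n ℂ) : harm A B = harmMean A B := by
  simp only [harm, harmMean, Matrix.nonsing_inv_eq_ringInverse]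

end Matrix

theorem geo_harm_le_harm_geo {n : Type*} [Fintype n] [DecidableEq n]
    (X Y Z W : Matrix n n ℂ)
    (hX : X.PosDef) (hY : Y.PosDef) (hZ : Z.PosDef) (hW : W.PosDef) :
    LoewnerLE (geo (harm X Y) (harm Z W)) (harm (geo X Z) (geo Y W)) := by
  open scoped MatrixOrder Matrix.Norms.L2Operator in
  open CStarAlgebra in
  have hX := hX.isStrictlyPositive
  have hY := hY.isStrictlyPositive
  have hZ := hZ.isStrictlyPositive
  have hW := hW.isStrictlyPositive
  rw [LoewnerLE, ← Matrix.le_iff, harm_eq_harmMean, harm_eq_harmMean, harm_eq_harmMean,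
    geo_eq_geomMean hX.nonneg hZ.nonneg, geo_eq_geomMean hY.nonneg hW.nonneg,
    geo_eq_geomMean (isStrictlyPositive_harmMean hX hY).nonneg
      (isStrictlyPositive_harmMean hZ hW).nonneg]
  exact geomMean_harmMean_le_harmMean_geomMean hX hY hZ hW
end

section
/- For p ∈ [0,1] and positive semidefinite matrices, the map (A,B) ↦ A^p ⊗ B^{1-p} is jointly concave: for positive definite A₁, A₂, B₁, B₂ and λ ∈ [0,1], ((1-λ)A₁ + λA₂)^p ⊗ ((1-λ)B₁ + λB₂)^{1-p} ≥ (1-λ)(A₁^p ⊗ B₁^{1-p}) + λ(A₂^p ⊗ B₂^{1-p}) in the Loewner order. -/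
/-! Ando's midpoint argument. For `Φ(p) = A ^ p ⊗ B ^ (1 - p)` exponents add under multiplication,
so `Φ((s + t) / 2) * Φ(s)⁻¹ * Φ((s + t) / 2) = Φ(t)`. For `C > 0` the block matrix
`[C, G; Gᴴ, D]` is positive semidefinite iff `Gᴴ C⁻¹ G ≤ D`, so `(C, G) ↦ Gᴴ C⁻¹ G` is jointly
convex. Together with the antitonicity of the inverse and the operator monotonicity of the square
root, this shows that the set of exponents `p` at which the inequality holds is closed under
midpoints. It contains `0` and `1`, where both sides agree, and it is closed because `Φ` is
continuous in `p`; hence it contains `[0, 1]`. -/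

open scoped ComplexOrder Kronecker

open scoped MatrixOrder Matrix.Norms.L2Operator

theorem IsClosed.Icc_subset_of_midpoint_mem {S : Set ℝ} (hS : IsClosed S) {a b : ℝ}
    (ha : a ∈ S) (hb : b ∈ S) (hmid : ∀ x ∈ S, ∀ y ∈ S, (x + y) / 2 ∈ S) :
    Set.Icc a b ⊆ S := by
  intro p ⟨hap, hpb⟩
  by_contra hp
  set u := sSup (S ∩ Set.Icc a p)
  set v := sInf (S ∩ Set.Icc p b)
  obtain ⟨huS, hau, hup⟩ : u ∈ S ∩ Set.Icc a p :=
    (isCompact_Icc.inter_left hS).sSup_mem ⟨a, ha, le_rfl, hap⟩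
  obtain ⟨hvS, hpv, hvb⟩ : v ∈ S ∩ Set.Icc p b :=
    (isCompact_Icc.inter_left hS).sInf_mem ⟨b, hb, hpb, le_rfl⟩
  have hup' : u < p := hup.lt_of_ne fun h => hp (h ▸ huS)
  have hpv' : p < v := hpv.lt_of_ne fun h => hp (h ▸ hvS)
  rcases le_total ((u + v) / 2) p with hm | hm
  · have : (u + v) / 2 ≤ u :=
      le_csSup (bddAbove_Icc.mono Set.inter_subset_right) ⟨hmid u huS v hvS, by linarith, hm⟩
    linarith
  · have : v ≤ (u + v) / 2 :=
      csInf_le (bddBelow_Icc.mono Set.inter_subset_right) ⟨hmid u huS v hvS, hm, by linarith⟩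
    linarith

theorem CStarAlgebra.le_of_mul_mul_le_mul_mul {A : Type*} [CStarAlgebra A] [PartialOrder A]
    [StarOrderedRing A] {d a b : A} (hd : IsStrictlyPositive d) (ha : 0 ≤ a) (hb : 0 ≤ b)
    (h : a * d * a ≤ b * d * b) : a ≤ b := by
  have hsq (x : A) : CFC.conjSqrt d x * CFC.conjSqrt d x = CFC.conjSqrt d (x * d * x) := by
    simp only [CFC.conjSqrt_apply, mul_assoc]
    rw [← mul_assoc (CFC.sqrt d) (CFC.sqrt d), CFC.sqrt_mul_sqrt_self d]
  have hnonneg {x : A} (hx : 0 ≤ x) : 0 ≤ CFC.conjSqrt d x := by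
    simpa using CFC.conjSqrt_le_conjSqrt (c := d) hx
  have key : CFC.conjSqrt d a ≤ CFC.conjSqrt d b := by
    rw [← CFC.sqrt_mul_self _ (hnonneg ha), ← CFC.sqrt_mul_self _ (hnonneg hb), hsq, hsq]
    exact CFC.sqrt_le_sqrt _ _ (CFC.conjSqrt_le_conjSqrt h)
  simpa only [CFC.conjSqrt_ringInverse_conjSqrt d] using
    CFC.conjSqrt_le_conjSqrt (c := Ring.inverse d) key

theorem Continuous.matrix_kronecker {X R l m p q : Type*} [TopologicalSpace X]
    [TopologicalSpace R] [Mul R] [ContinuousMul R] {A : X → Matrix l m R}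
    {B : X → Matrix p q R} (hA : Continuous A) (hB : Continuous B) :
    Continuous fun x => A x ⊗ₖ B x :=
  continuous_matrix fun i j => (hA.matrix_elem i.1 j.1).mul (hB.matrix_elem i.2 j.2)

namespace Matrix

section RCLike

variable {𝕜 : Type*} [RCLike 𝕜]

theorem convex_setOf_posDef {n : Type*} : Convex ℝ {C : Matrix n n 𝕜 | C.PosDef} :=
  convex_iff_forall_pos.mpr fun _ hx _ hy _ _ ha hb _ => (hx.smul ha).add (hy.smul hb)

variable {n : Type*} [Fintype n] [DecidableEq n]

theorem convexOn_conjTranspose_mul_inv_mul {m : Type*} [Fintype m] :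
    ConvexOn ℝ ({C : Matrix n n 𝕜 | C.PosDef} ×ˢ Set.univ)
      (fun x : Matrix n n 𝕜 × Matrix n m 𝕜 => x.2ᴴ * x.1⁻¹ * x.2) := by
  refine ⟨convex_setOf_posDef.prod convex_univ, ?_⟩
  rintro ⟨C₁, B₁⟩ ⟨hC₁, -⟩ ⟨C₂, B₂⟩ ⟨hC₂, -⟩ a b ha hb hab
  simp only [Prod.smul_mk, Prod.mk_add_mk] at hC₁ hC₂ ⊢
  have hblock {C : Matrix n n 𝕜} (B : Matrix n m 𝕜) (hC : C.PosDef) :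
      (fromBlocks C B Bᴴ (Bᴴ * C⁻¹ * B)).PosSemidef := by
    have := hC.isUnit.invertible
    exact (PosDef.fromBlocks₁₁ B _ hC).mpr (by rw [sub_self]; exact .zero)
  have hC : (a • C₁ + b • C₂).PosDef := convex_setOf_posDef hC₁ hC₂ ha hb hab
  have := hC.isUnit.invertible
  have hsum := ((hblock B₁ hC₁).smul ha).add ((hblock B₂ hC₂).smul hb)
  rw [fromBlocks_smul, fromBlocks_smul, fromBlocks_add] at hsum
  exact (PosDef.fromBlocks₁₁ _ _ hC).mp
    (by simpa [conjTranspose_add, conjTranspose_smul] using hsum)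

theorem IsHermitian.continuous_cfc_fun {X : Type*} [TopologicalSpace X] {A : Matrix n n 𝕜}
    (hA : A.IsHermitian) {f : X → ℝ → ℝ} (hf : ∀ i, Continuous fun x => f x (hA.eigenvalues i)) :
    Continuous fun x => cfc (f x) A := by
  simp_rw [hA.cfc_eq, IsHermitian.cfc, Unitary.conjStarAlgAut_apply]
  refine (continuous_const.matrix_mul (Continuous.matrix_diagonal ?_)).matrix_mul continuous_const
  exact continuous_pi fun i => RCLike.continuous_ofReal.comp (hf i)

end RCLike

variable {n : Type*} [Fintype n] [DecidableEq n]

theorem le_of_convexCombination_le {C₁ C₂ C M₁ M₂ M : Matrix n n ℂ}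
    (hC₁ : C₁.PosDef) (hC₂ : C₂.PosDef) (hM₁ : 0 ≤ M₁) (hM₂ : 0 ≤ M₂) (hM : 0 ≤ M)
    {a b : ℝ} (ha : 0 ≤ a) (hb : 0 ≤ b) (hab : a + b = 1) (hC : a • C₁ + b • C₂ ≤ C)
    (hMCM : a • (M₁ * C₁⁻¹ * M₁) + b • (M₂ * C₂⁻¹ * M₂) ≤ M * C⁻¹ * M) :
    a • M₁ + b • M₂ ≤ M := by
  set X := a • M₁ + b • M₂
  have hX : 0 ≤ X := add_nonneg (smul_nonneg ha hM₁) (smul_nonneg hb hM₂)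
  have hC' : (a • C₁ + b • C₂).PosDef := convex_setOf_posDef hC₁ hC₂ ha hb hab
  have hCpos : C.PosDef := isStrictlyPositive_iff_posDef.mp (hC'.isStrictlyPositive.of_le hC)
  have hinv : C⁻¹ ≤ (a • C₁ + b • C₂)⁻¹ := by
    simpa only [nonsing_inv_eq_ringInverse] using
      CStarAlgebra.ringInverse_le_ringInverse hC hC'.isStrictlyPositive
  have hconv : Xᴴ * (a • C₁ + b • C₂)⁻¹ * X ≤ a • (M₁ᴴ * C₁⁻¹ * M₁) + b • (M₂ᴴ * C₂⁻¹ * M₂) :=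
    convexOn_conjTranspose_mul_inv_mul.2 (x := (C₁, M₁)) (y := (C₂, M₂))
      ⟨hC₁, trivial⟩ ⟨hC₂, trivial⟩ ha hb hab
  have hermitian {Y : Matrix n n ℂ} (hY : 0 ≤ Y) : Yᴴ = Y := hY.isSelfAdjoint
  rw [hermitian hX, hermitian hM₁, hermitian hM₂] at hconv
  refine CStarAlgebra.le_of_mul_mul_le_mul_mul hCpos.inv.isStrictlyPositive hX hM ?_
  calc X * C⁻¹ * X ≤ X * (a • C₁ + b • C₂)⁻¹ * X :=
        IsSelfAdjoint.conjugate_le_conjugate hinv hX.isSelfAdjoint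
    _ ≤ M * C⁻¹ * M := hconv.trans hMCM

namespace PosDef

variable {A : Matrix n n ℂ}

theorem rpow (hA : A.PosDef) (p : ℝ) : (A ^ p).PosDef :=
  isStrictlyPositive_iff_posDef.mp (hA.isStrictlyPositive.rpow A p)

theorem continuous_rpow (hA : A.PosDef) : Continuous fun p : ℝ => A ^ p := by
  simp_rw [CFC.rpow_eq_cfc_real hA.posSemidef.nonneg]
  exact hA.1.continuous_cfc_fun fun i =>
    continuous_const.rpow continuous_id fun _ => .inl (hA.eigenvalues_pos i).ne'

theorem rpow_midpoint_mul_inv_mul (hA : A.PosDef) (s t : ℝ) :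
    A ^ ((s + t) / 2) * (A ^ s)⁻¹ * A ^ ((s + t) / 2) = A ^ t := by
  have hA' := hA.isStrictlyPositive
  rw [inv_eq_left_inv (CFC.rpow_neg_mul_rpow s hA'), ← CFC.rpow_add hA'.isUnit,
    ← CFC.rpow_add hA'.isUnit]
  ring_nf

end PosDef

end Matrix

open Matrix

theorem loewnerLE_iff_le {n : Type*} [Fintype n] {A B : Matrix n n ℂ} :
    LoewnerLE A B ↔ A ≤ B :=
  Iff.rfl

section kronecker

variable {k m : Type*} [Fintype k] [DecidableEq k] [Fintype m] [DecidableEq m]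
  {A A₁ A₂ : Matrix k k ℂ} {B B₁ B₂ : Matrix m m ℂ}

noncomputable def kroneckerRpow (A : Matrix k k ℂ) (B : Matrix m m ℂ) (p : ℝ) :
    Matrix (k × m) (k × m) ℂ :=
  (A ^ p) ⊗ₖ (B ^ (1 - p))

theorem mpow_kronecker_mpow (hA : A.PosSemidef) (hB : B.PosSemidef) (p : ℝ) :
    mpow A p ⊗ₖ mpow B (1 - p) = kroneckerRpow A B p := by
  rw [mpow, mpow, ← CFC.rpow_eq_cfc_real hA.nonneg, ← CFC.rpow_eq_cfc_real hB.nonneg,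
    kroneckerRpow]

theorem kroneckerRpow_zero (hA : A.PosSemidef) (hB : B.PosSemidef) :
    kroneckerRpow A B 0 = 1 ⊗ₖ B := by
  rw [kroneckerRpow, sub_zero, CFC.rpow_zero A hA.nonneg, CFC.rpow_one B hB.nonneg]

theorem kroneckerRpow_one (hA : A.PosSemidef) (hB : B.PosSemidef) :
    kroneckerRpow A B 1 = A ⊗ₖ 1 := by
  rw [kroneckerRpow, sub_self, CFC.rpow_one A hA.nonneg, CFC.rpow_zero B hB.nonneg]

theorem kroneckerRpow_posDef (hA : A.PosDef) (hB : B.PosDef) (p : ℝ) :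
    (kroneckerRpow A B p).PosDef :=
  (hA.rpow p).kronecker (hB.rpow (1 - p))

theorem continuous_kroneckerRpow (hA : A.PosDef) (hB : B.PosDef) :
    Continuous fun p => kroneckerRpow A B p :=
  hA.continuous_rpow.matrix_kronecker
    (hB.continuous_rpow.comp (continuous_const.sub continuous_id))

theorem kroneckerRpow_midpoint_mul_inv_mul (hA : A.PosDef) (hB : B.PosDef) (s t : ℝ) :
    kroneckerRpow A B ((s + t) / 2) * (kroneckerRpow A B s)⁻¹ * kroneckerRpow A B ((s + t) / 2) =
      kroneckerRpow A B t := by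
  have h : 1 - (s + t) / 2 = ((1 - s) + (1 - t)) / 2 := by ring
  simp only [kroneckerRpow, inv_kronecker, ← mul_kronecker_mul, h,
    hA.rpow_midpoint_mul_inv_mul, hB.rpow_midpoint_mul_inv_mul]

theorem convexCombination_kroneckerRpow_midpoint_le (hA₁ : A₁.PosDef) (hA₂ : A₂.PosDef)
    (hB₁ : B₁.PosDef) (hB₂ : B₂.PosDef) {a b : ℝ} (ha : 0 ≤ a) (hb : 0 ≤ b) (hab : a + b = 1)
    {s t : ℝ}
    (hs : a • kroneckerRpow A₁ B₁ s + b • kroneckerRpow A₂ B₂ s ≤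
      kroneckerRpow (a • A₁ + b • A₂) (a • B₁ + b • B₂) s)
    (ht : a • kroneckerRpow A₁ B₁ t + b • kroneckerRpow A₂ B₂ t ≤
      kroneckerRpow (a • A₁ + b • A₂) (a • B₁ + b • B₂) t) :
    a • kroneckerRpow A₁ B₁ ((s + t) / 2) + b • kroneckerRpow A₂ B₂ ((s + t) / 2) ≤
      kroneckerRpow (a • A₁ + b • A₂) (a • B₁ + b • B₂) ((s + t) / 2) := by
  have hA := convex_setOf_posDef hA₁ hA₂ ha hb hab
  have hB := convex_setOf_posDef hB₁ hB₂ ha hb hab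
  refine le_of_convexCombination_le (kroneckerRpow_posDef hA₁ hB₁ s)
    (kroneckerRpow_posDef hA₂ hB₂ s) (kroneckerRpow_posDef hA₁ hB₁ _).posSemidef.nonneg
    (kroneckerRpow_posDef hA₂ hB₂ _).posSemidef.nonneg
    (kroneckerRpow_posDef hA hB _).posSemidef.nonneg ha hb hab hs ?_
  rwa [kroneckerRpow_midpoint_mul_inv_mul hA₁ hB₁, kroneckerRpow_midpoint_mul_inv_mul hA₂ hB₂,
    kroneckerRpow_midpoint_mul_inv_mul hA hB]

end kronecker

theorem lieb_joint_concavity {k m : Type*} [Fintype k] [DecidableEq k]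
    [Fintype m] [DecidableEq m] (p : ℝ) (hp0 : 0 ≤ p) (hp1 : p ≤ 1)
    (A₁ A₂ : Matrix k k ℂ) (B₁ B₂ : Matrix m m ℂ)
    (hA₁ : A₁.PosDef) (hA₂ : A₂.PosDef) (hB₁ : B₁.PosDef) (hB₂ : B₂.PosDef)
    (l : ℝ) (hl0 : 0 ≤ l) (hl1 : l ≤ 1) :
    LoewnerLE
      ((1 - l) • (mpow A₁ p ⊗ₖ mpow B₁ (1 - p)) + l • (mpow A₂ p ⊗ₖ mpow B₂ (1 - p)))
      (mpow ((1 - l) • A₁ + l • A₂) p ⊗ₖ mpow ((1 - l) • B₁ + l • B₂) (1 - p)) := by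
  have hl : 1 - l + l = 1 := sub_add_cancel 1 l
  have hA : ((1 - l) • A₁ + l • A₂).PosDef := convex_setOf_posDef hA₁ hA₂ (sub_nonneg.2 hl1) hl0 hl
  have hB : ((1 - l) • B₁ + l • B₂).PosDef := convex_setOf_posDef hB₁ hB₂ (sub_nonneg.2 hl1) hl0 hl
  rw [loewnerLE_iff_le, mpow_kronecker_mpow hA₁.posSemidef hB₁.posSemidef,
    mpow_kronecker_mpow hA₂.posSemidef hB₂.posSemidef,
    mpow_kronecker_mpow hA.posSemidef hB.posSemidef]
  suffices h : Set.Icc 0 1 ⊆ {p | (1 - l) • kroneckerRpow A₁ B₁ p + l • kroneckerRpow A₂ B₂ p ≤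
      kroneckerRpow ((1 - l) • A₁ + l • A₂) ((1 - l) • B₁ + l • B₂) p} from h ⟨hp0, hp1⟩
  refine IsClosed.Icc_subset_of_midpoint_mem ?_ ?_ ?_ fun s hs t ht =>
    convexCombination_kroneckerRpow_midpoint_le hA₁ hA₂ hB₁ hB₂ (sub_nonneg.2 hl1) hl0 hl hs ht
  · have := continuous_kroneckerRpow hA₁ hB₁
    have := continuous_kroneckerRpow hA₂ hB₂
    exact isClosed_le (by fun_prop) (continuous_kroneckerRpow hA hB)
  · rw [Set.mem_ofPred_eq, kroneckerRpow_zero hA₁.posSemidef hB₁.posSemidef,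
      kroneckerRpow_zero hA₂.posSemidef hB₂.posSemidef,
      kroneckerRpow_zero hA.posSemidef hB.posSemidef, kronecker_add, kronecker_smul,
      kronecker_smul]
  · rw [Set.mem_ofPred_eq, kroneckerRpow_one hA₁.posSemidef hB₁.posSemidef,
      kroneckerRpow_one hA₂.posSemidef hB₂.posSemidef,
      kroneckerRpow_one hA.posSemidef hB.posSemidef, add_kronecker, smul_kronecker,
      smul_kronecker]
end

section
/- There exist 3×3 positive definite matrices A₁, A₂, B₁, B₂ such that ((A₁+B₁)² + (A₂+B₂)²)^{1/2} is not ≤ (A₁² + A₂²)^{1/2} + (B₁² + B₂²)^{1/2} in the Loewner order. -/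
open scoped ComplexOrder Kronecker

/-!
The square root is operator monotone (`CFC.sqrt_le_sqrt`), so the three square roots can be
bracketed by explicit rational matrices: `A₁² + A₂² ≤ C₁²` and `B₁² + B₂² ≤ C₂²` give
`√(A₁² + A₂²) ≤ C₁` and `√(B₁² + B₂²) ≤ C₂`, while `D² ≤ (A₁ + B₁)² + (A₂ + B₂)²` gives
`D ≤ √((A₁ + B₁)² + (A₂ + B₂)²)`. The Minkowski inequality would then force `D ≤ C₁ + C₂`,
but the quadratic form of `C₁ + C₂ - D` is negative at `(1, 0, 1)`.
-/

namespace CFC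

variable {A : Type*} [CStarAlgebra A] [PartialOrder A] [StarOrderedRing A]

lemma le_sqrt_of_sq_le {a b : A} (ha : 0 ≤ a) (h : a ^ 2 ≤ b) : a ≤ sqrt b := by
  simpa [sqrt_sq a ha] using sqrt_le_sqrt _ _ h

lemma sqrt_le_of_le_sq {a b : A} (hb : 0 ≤ b) (h : a ≤ b ^ 2) : sqrt a ≤ b := by
  simpa [sqrt_sq b hb] using sqrt_le_sqrt _ _ h

lemma not_sqrt_le_sqrt_add_sqrt {a b c x y z : A} (hx : 0 ≤ x) (hy : 0 ≤ y) (hz : 0 ≤ z)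
    (ha : a ≤ x ^ 2) (hb : b ≤ y ^ 2) (hc : z ^ 2 ≤ c) (hxyz : ¬ z ≤ x + y) :
    ¬ sqrt c ≤ sqrt a + sqrt b := fun h =>
  hxyz <| (le_sqrt_of_sq_le hz hc).trans <| h.trans <|
    add_le_add (sqrt_le_of_le_sq hx ha) (sqrt_le_of_le_sq hy hb)

end CFC

open Matrix
open scoped MatrixOrder Matrix.Norms.L2Operator

lemma mpow_half_eq_sqrt {n : Type*} [Fintype n] [DecidableEq n] {A : Matrix n n ℂ}
    (hA : 0 ≤ A) : mpow A (1/2) = CFC.sqrt A := by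
  rw [CFC.sqrt_eq_real_sqrt A hA, cfcₙ_eq_cfc, mpow]
  exact cfc_congr fun x _ => (Real.sqrt_eq_rpow x).symm

lemma Matrix.PosSemidef.of_eq_conjTranspose_mul_diagonal_mul {n R : Type*} [Fintype n]
    [DecidableEq n] [CommRing R] [PartialOrder R] [StarRing R] [StarOrderedRing R]
    {X L : Matrix n n R} {d : n → R} (hd : 0 ≤ d) (h : X = Lᴴ * diagonal d * L) :
    X.PosSemidef :=
  h ▸ (PosSemidef.diagonal hd).conjTranspose_mul_mul_same L

noncomputable section

namespace MinkowskiCounterexample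

/- `A₂` and `B₁` are the singular matrices of the paper shifted by `I / 10`, to make them
positive definite. -/
def A₁ : Matrix (Fin 3) (Fin 3) ℂ := !![3, -1, 0; -1, 1, 0; 0, 0, 1]
def A₂ : Matrix (Fin 3) (Fin 3) ℂ := !![11/10, 1, 0; 1, 11/10, 0; 0, 0, 11/10]
def B₁ : Matrix (Fin 3) (Fin 3) ℂ := !![11/10, 0, 0; 0, 11/10, -1; 0, -1, 11/10]
def B₂ : Matrix (Fin 3) (Fin 3) ℂ := !![1, 0, 0; 0, 1, 1; 0, 1, 2]

/- Numerical square roots of `A₁² + A₂²`, `B₁² + B₂²` (shifted by `+0.015 I`) and of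
`(A₁ + B₁)² + (A₂ + B₂)²` (shifted by `-0.015 I`), rounded to multiples of `1 / 50`. -/
def C₁ : Matrix (Fin 3) (Fin 3) ℂ := !![7/2, -8/25, 0; -8/25, 51/25, 0; 0, 0, 3/2]
def C₂ : Matrix (Fin 3) (Fin 3) ℂ := !![3/2, 0, 0; 0, 103/50, 4/25; 0, 4/25, 27/10]
def D : Matrix (Fin 3) (Fin 3) ℂ :=
  !![24/5, -6/25, 6/25; -6/25, 89/25, 7/50; 6/25, 7/50, 199/50]

/- Each positivity statement below is certified by the exact factorization `Lᴴ * diagonal d * L`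
with `L` unit upper triangular and `d` positive. -/
lemma A₁_posDef : A₁.PosDef := by
  refine (PosSemidef.of_eq_conjTranspose_mul_diagonal_mul (L := !![1, -1/3, 0; 0, 1, 0; 0, 0, 1])
    (d := ![3, 2/3, 1]) ?_ ?_).posDef_iff_det_ne_zero.mpr ?_
  · intro i; fin_cases i <;> norm_num [Complex.le_def]
  · ext i j; fin_cases i <;> fin_cases j <;>
      simp [A₁, mul_apply, Fin.sum_univ_three, map_div₀, map_ofNat] <;> norm_num
  · simp [A₁, det_fin_three]; norm_num

lemma A₂_posDef : A₂.PosDef := by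
  refine (PosSemidef.of_eq_conjTranspose_mul_diagonal_mul (L := !![1, 10/11, 0; 0, 1, 0; 0, 0, 1])
    (d := ![11/10, 21/110, 11/10]) ?_ ?_).posDef_iff_det_ne_zero.mpr ?_
  · intro i; fin_cases i <;> norm_num [Complex.le_def]
  · ext i j; fin_cases i <;> fin_cases j <;>
      simp [A₂, mul_apply, Fin.sum_univ_three, map_div₀, map_ofNat]
    norm_num
  · simp [A₂, det_fin_three]; norm_num

lemma B₁_posDef : B₁.PosDef := by
  refine (PosSemidef.of_eq_conjTranspose_mul_diagonal_mul (L := !![1, 0, 0; 0, 1, -10/11; 0, 0, 1])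
    (d := ![11/10, 11/10, 21/110]) ?_ ?_).posDef_iff_det_ne_zero.mpr ?_
  · intro i; fin_cases i <;> norm_num [Complex.le_def]
  · ext i j; fin_cases i <;> fin_cases j <;>
      simp [B₁, mul_apply, Fin.sum_univ_three, map_div₀, map_ofNat] <;> norm_num
  · simp [B₁, det_fin_three]; norm_num

lemma B₂_posDef : B₂.PosDef := by
  refine (PosSemidef.of_eq_conjTranspose_mul_diagonal_mul (L := !![1, 0, 0; 0, 1, 1; 0, 0, 1])
    (d := ![1, 1, 1]) ?_ ?_).posDef_iff_det_ne_zero.mpr ?_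
  · intro i; fin_cases i <;> norm_num [Complex.le_def]
  · ext i j; fin_cases i <;> fin_cases j <;>
      simp [B₂, mul_apply, Fin.sum_univ_three, one_add_one_eq_two]
  · simp [B₂, det_fin_three]; norm_num

lemma C₁_nonneg : 0 ≤ C₁ := by
  refine (PosSemidef.of_eq_conjTranspose_mul_diagonal_mul
    (L := !![1, -16/175, 0; 0, 1, 0; 0, 0, 1]) (d := ![7/2, 8797/4375, 3/2]) ?_ ?_).nonneg
  · intro i; fin_cases i <;> norm_num [Complex.le_def]
  · ext i j; fin_cases i <;> fin_cases j <;>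
      simp [C₁, mul_apply, Fin.sum_univ_three, map_div₀, map_ofNat] <;> norm_num

lemma C₂_nonneg : 0 ≤ C₂ := by
  refine (PosSemidef.of_eq_conjTranspose_mul_diagonal_mul
    (L := !![1, 0, 0; 0, 1, 8/103; 0, 0, 1]) (d := ![3/2, 103/50, 13841/5150]) ?_ ?_).nonneg
  · intro i; fin_cases i <;> norm_num [Complex.le_def]
  · ext i j; fin_cases i <;> fin_cases j <;>
      simp [C₂, mul_apply, Fin.sum_univ_three, map_div₀, map_ofNat] <;> norm_num

lemma D_nonneg : 0 ≤ D := by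
  refine (PosSemidef.of_eq_conjTranspose_mul_diagonal_mul
    (L := !![1, -1/20, 1/20; 0, 1, 38/887; 0, 0, 1]) (d := ![24/5, 887/250, 87846/22175])
    ?_ ?_).nonneg
  · intro i; fin_cases i <;> norm_num [Complex.le_def]
  · ext i j; fin_cases i <;> fin_cases j <;>
      simp [D, mul_apply, Fin.sum_univ_three, map_div₀, map_ofNat] <;> norm_num

lemma sq_add_sq_le_C₁_sq : A₁ ^ 2 + A₂ ^ 2 ≤ C₁ ^ 2 := by
  refine PosSemidef.of_eq_conjTranspose_mul_diagonal_mul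
    (L := !![1, 17/89, 0; 0, 1, 0; 0, 0, 1]) (d := ![89/625, 10859/222500, 1/25]) ?_ ?_
  · intro i; fin_cases i <;> norm_num [Complex.le_def]
  · ext i j; fin_cases i <;> fin_cases j <;>
      simp [A₁, A₂, C₁, sq, mul_apply, Fin.sum_univ_three, map_div₀, map_ofNat] <;> norm_num

lemma sq_add_sq_le_C₂_sq : B₁ ^ 2 + B₂ ^ 2 ≤ C₂ ^ 2 := by
  refine PosSemidef.of_eq_conjTranspose_mul_diagonal_mul
    (L := !![1, 0, 0; 0, 1, -24/37; 0, 0, 1]) (d := ![1/25, 37/625, 1866/23125]) ?_ ?_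
  · intro i; fin_cases i <;> norm_num [Complex.le_def]
  · ext i j; fin_cases i <;> fin_cases j <;>
      simp [B₁, B₂, C₂, sq, mul_apply, Fin.sum_univ_three, map_div₀, map_ofNat] <;> norm_num

lemma D_sq_le : D ^ 2 ≤ (A₁ + B₁) ^ 2 + (A₂ + B₂) ^ 2 := by
  refine PosSemidef.of_eq_conjTranspose_mul_diagonal_mul
    (L := !![1, -34/81, -92/81; 0, 1, -5851/11701; 0, 0, 1])
    (d := ![81/1250, 11701/202500, 127447/29252500]) ?_ ?_
  · intro i; fin_cases i <;> norm_num [Complex.le_def]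
  · ext i j; fin_cases i <;> fin_cases j <;>
      simp [A₁, A₂, B₁, B₂, D, sq, mul_apply, Fin.sum_univ_three, map_div₀, map_ofNat] <;>
      norm_num

lemma not_D_le_C₁_add_C₂ : ¬ D ≤ C₁ + C₂ := by
  intro h
  have := h.dotProduct_mulVec_nonneg ![1, 0, 1]
  simp [C₁, C₂, D, mulVec, dotProduct, Fin.sum_univ_three] at this
  norm_num [Complex.le_def] at this

end MinkowskiCounterexample

end

open MinkowskiCounterexample in
theorem minkowski_operator_ineq_fails :
    ∃ A₁ A₂ B₁ B₂ : Matrix (Fin 3) (Fin 3) ℂ,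
      A₁.PosDef ∧ A₂.PosDef ∧ B₁.PosDef ∧ B₂.PosDef ∧
      ¬ LoewnerLE
        (mpow ((A₁ + B₁) ^ 2 + (A₂ + B₂) ^ 2) (1/2))
        (mpow (A₁ ^ 2 + A₂ ^ 2) (1/2) + mpow (B₁ ^ 2 + B₂ ^ 2) (1/2)) := by
  refine ⟨A₁, A₂, B₁, B₂, A₁_posDef, A₂_posDef, B₁_posDef, B₂_posDef, ?_⟩
  have hP : 0 ≤ A₁ ^ 2 + A₂ ^ 2 :=
    ((A₁_posDef.posSemidef.pow 2).add (A₂_posDef.posSemidef.pow 2)).nonneg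
  have hQ : 0 ≤ B₁ ^ 2 + B₂ ^ 2 :=
    ((B₁_posDef.posSemidef.pow 2).add (B₂_posDef.posSemidef.pow 2)).nonneg
  have hM : 0 ≤ (A₁ + B₁) ^ 2 + (A₂ + B₂) ^ 2 :=
    (((A₁_posDef.add B₁_posDef).posSemidef.pow 2).add
      ((A₂_posDef.add B₂_posDef).posSemidef.pow 2)).nonneg
  rw [LoewnerLE, ← Matrix.le_iff, mpow_half_eq_sqrt hM, mpow_half_eq_sqrt hP,
    mpow_half_eq_sqrt hQ]
  exact CFC.not_sqrt_le_sqrt_add_sqrt C₁_nonneg C₂_nonneg D_nonneg sq_add_sq_le_C₁_sq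
    sq_add_sq_le_C₂_sq D_sq_le not_D_le_C₁_add_C₂
end

section
/- If A and B are positive definite n×n matrices (n ≥ 1), then det(A+B)^{1/n} ≥ det(A)^{1/n} + det(B)^{1/n} (Minkowski's determinant inequality). -/
/-!
Write `A = Sᴴ S`. For the positive semidefinite `C = S⁻ᴴ B S⁻¹` one has
`det (A + B) = det A * det (1 + C)` and `det B = det A * det C`, so in terms of the eigenvalues
`λᵢ ≥ 0` of `C` the inequality becomes `1 + (∏ λᵢ)^(1/n) ≤ (∏ (1 + λᵢ))^(1/n)`. This is the
superadditivity of the geometric mean, which follows by adding the AM-GM inequalities for the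
numbers `1 / (1 + λᵢ)` and `λᵢ / (1 + λᵢ)`.
-/

open scoped ComplexOrder Kronecker

open Finset in
theorem Real.geom_mean_superadditive_weighted {ι : Type*} (s : Finset ι) (w a b : ι → ℝ)
    (hw : ∀ i ∈ s, 0 ≤ w i) (hw' : ∑ i ∈ s, w i = 1) (ha : ∀ i ∈ s, 0 ≤ a i)
    (hb : ∀ i ∈ s, 0 ≤ b i) :
    ∏ i ∈ s, a i ^ w i + ∏ i ∈ s, b i ^ w i ≤ ∏ i ∈ s, (a i + b i) ^ w i := by
  set x := fun i => a i / (a i + b i)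
  set y := fun i => b i / (a i + b i)
  -- `x i + y i` is `1`, or `0` when `a i = b i = 0`; either way `x i * (a i + b i) = a i`.
  have hx : ∀ i ∈ s, a i = x i * (a i + b i) := fun i hi =>
    (div_mul_cancel_of_imp fun h => by linarith [ha i hi, hb i hi]).symm
  have hy : ∀ i ∈ s, b i = y i * (a i + b i) := fun i hi =>
    (div_mul_cancel_of_imp fun h => by linarith [ha i hi, hb i hi]).symm
  have hxy : ∀ i ∈ s, x i + y i ≤ 1 := fun i _ => by
    rw [← add_div]; exact div_le_one_of_le₀ le_rfl (add_nonneg (ha i ‹_›) (hb i ‹_›))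
  have hx0 : ∀ i ∈ s, 0 ≤ x i := fun i hi =>
    div_nonneg (ha i hi) (add_nonneg (ha i hi) (hb i hi))
  have hy0 : ∀ i ∈ s, 0 ≤ y i := fun i hi =>
    div_nonneg (hb i hi) (add_nonneg (ha i hi) (hb i hi))
  have hsplit : ∀ z : ι → ℝ, (∀ i ∈ s, 0 ≤ z i) →
      ∏ i ∈ s, (z i * (a i + b i)) ^ w i = (∏ i ∈ s, z i ^ w i) * ∏ i ∈ s, (a i + b i) ^ w i :=
    fun z hz => by
      rw [← prod_mul_distrib]
      exact prod_congr rfl fun i hi =>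
        Real.mul_rpow (hz i hi) (add_nonneg (ha i hi) (hb i hi))
  have hG : 0 ≤ ∏ i ∈ s, (a i + b i) ^ w i :=
    prod_nonneg fun i hi => Real.rpow_nonneg (add_nonneg (ha i hi) (hb i hi)) _
  calc ∏ i ∈ s, a i ^ w i + ∏ i ∈ s, b i ^ w i
      = (∏ i ∈ s, x i ^ w i + ∏ i ∈ s, y i ^ w i) * ∏ i ∈ s, (a i + b i) ^ w i := by
        rw [prod_congr rfl fun i hi => congrArg (· ^ w i) (hx i hi),
          prod_congr rfl fun i hi => congrArg (· ^ w i) (hy i hi), hsplit x hx0, hsplit y hy0,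
          add_mul]
    _ ≤ (∑ i ∈ s, w i * x i + ∑ i ∈ s, w i * y i) * ∏ i ∈ s, (a i + b i) ^ w i := by
        gcongr
        · exact Real.geom_mean_le_arith_mean_weighted s w x hw hw' hx0
        · exact Real.geom_mean_le_arith_mean_weighted s w y hw hw' hy0
    _ ≤ 1 * ∏ i ∈ s, (a i + b i) ^ w i := by
        gcongr
        rw [← sum_add_distrib, ← hw']
        exact sum_le_sum fun i hi => by
          rw [← mul_add]; exact mul_le_of_le_one_right (hw i hi) (hxy i hi)
    _ = ∏ i ∈ s, (a i + b i) ^ w i := one_mul _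

theorem Real.geom_mean_superadditive {ι : Type*} [Fintype ι] [Nonempty ι] (a b : ι → ℝ)
    (ha : ∀ i, 0 ≤ a i) (hb : ∀ i, 0 ≤ b i) :
    (∏ i, a i) ^ (Fintype.card ι : ℝ)⁻¹ + (∏ i, b i) ^ (Fintype.card ι : ℝ)⁻¹ ≤
      (∏ i, (a i + b i)) ^ (Fintype.card ι : ℝ)⁻¹ := by
  simp only [← Real.finsetProd_rpow _ _ fun i _ => ha i,
    ← Real.finsetProd_rpow _ _ fun i _ => hb i,
    ← Real.finsetProd_rpow _ _ fun i _ => add_nonneg (ha i) (hb i)]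
  refine Real.geom_mean_superadditive_weighted _ _ _ _ (fun _ _ => by positivity) ?_
    (fun i _ => ha i) (fun i _ => hb i)
  simp [Finset.card_univ]

theorem Matrix.IsHermitian.det_one_add {𝕜 n : Type*} [RCLike 𝕜] [Fintype n] [DecidableEq n]
    {A : Matrix n n 𝕜} (hA : A.IsHermitian) :
    (1 + A).det = ∏ i, ((1 + hA.eigenvalues i : ℝ) : 𝕜) := by
  have : 1 + A = cfc (fun x : ℝ => 1 + x) A := by
    rw [cfc_add .., cfc_const_one .., cfc_id' ..]
  rw [this, hA.cfc_eq]
  simp [IsHermitian.cfc, -Unitary.conjStarAlgAut_apply]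

open scoped Matrix MatrixOrder in
theorem Matrix.PosDef.exists_det_add_eq {𝕜 n : Type*} [RCLike 𝕜] [Fintype n] [DecidableEq n]
    {A B : Matrix n n 𝕜} (hA : A.PosDef) (hB : B.PosSemidef) :
    ∃ C : Matrix n n 𝕜, C.PosSemidef ∧ (A + B).det = A.det * (1 + C).det ∧
      B.det = A.det * C.det := by
  obtain ⟨S, rfl⟩ := CStarAlgebra.nonneg_iff_eq_star_mul_self.mp hA.posSemidef.nonneg
  have hS : IsUnit S.det := by
    refine isUnit_iff_ne_zero.mpr fun h => hA.det_pos.ne' ?_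
    rw [det_mul, h, mul_zero]
  set C := (S⁻¹)ᴴ * B * S⁻¹ with hC
  have hB_eq : B = Sᴴ * C * S := by
    rw [hC, conjTranspose_nonsing_inv, Matrix.mul_assoc, Matrix.mul_assoc, Matrix.mul_assoc,
      nonsing_inv_mul _ hS, Matrix.mul_one, ← Matrix.mul_assoc,
      mul_nonsing_inv _ (by simpa using hS.star), Matrix.one_mul]
  have hAB_eq : star S * S + B = Sᴴ * (1 + C) * S := by
    rw [hB_eq, Matrix.mul_add, Matrix.add_mul, Matrix.mul_one, star_eq_conjTranspose]
  refine ⟨C, hB.conjTranspose_mul_mul_same _, ?_, ?_⟩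
  · rw [hAB_eq, star_eq_conjTranspose]
    simp only [det_mul]; ring
  · rw [hB_eq, star_eq_conjTranspose]
    simp only [det_mul]; ring

theorem Matrix.PosDef.det_rpow_add_le {n : Type*} [Fintype n] [DecidableEq n] [Nonempty n]
    {A B : Matrix n n ℝ} (hA : A.PosDef) (hB : B.PosSemidef) :
    A.det ^ (Fintype.card n : ℝ)⁻¹ + B.det ^ (Fintype.card n : ℝ)⁻¹ ≤
      (A + B).det ^ (Fintype.card n : ℝ)⁻¹ := by
  obtain ⟨C, hC, hdet_add, hdet_B⟩ := hA.exists_det_add_eq hB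
  set r := (Fintype.card n : ℝ)⁻¹
  set μ := hC.isHermitian.eigenvalues
  have hμ : ∀ i, 0 ≤ μ i := hC.eigenvalues_nonneg
  have hdet_one_add : (1 + C).det = ∏ i, (1 + μ i) := by
    simpa using hC.isHermitian.det_one_add
  have hdet_C : C.det = ∏ i, μ i := by
    simpa using hC.isHermitian.det_eq_prod_eigenvalues
  have hA_nonneg : 0 ≤ A.det := hA.det_pos.le
  have key : 1 + (∏ i, μ i) ^ r ≤ (∏ i, (1 + μ i)) ^ r := by
    simpa [r] using Real.geom_mean_superadditive (fun _ => 1) μ (fun _ => zero_le_one) hμ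
  calc A.det ^ r + B.det ^ r = A.det ^ r * (1 + (∏ i, μ i) ^ r) := by
        rw [hdet_B, hdet_C, Real.mul_rpow hA_nonneg (Finset.prod_nonneg fun i _ => hμ i)]; ring
    _ ≤ A.det ^ r * (∏ i, (1 + μ i)) ^ r := by gcongr
    _ = (A + B).det ^ r := by
        rw [hdet_add, hdet_one_add,
          Real.mul_rpow hA_nonneg (Finset.prod_nonneg fun i _ => by linarith [hμ i])]

theorem minkowski_det_inequality (n : ℕ) (hn : 1 ≤ n)
    (A B : Matrix (Fin n) (Fin n) ℝ) (hA : A.PosDef) (hB : B.PosDef) :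
    A.det ^ ((n : ℝ)⁻¹) + B.det ^ ((n : ℝ)⁻¹) ≤ (A + B).det ^ ((n : ℝ)⁻¹) := by
  have : NeZero n := ⟨by omega⟩
  simpa using hA.det_rpow_add_le hB.posSemidef
end
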